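/- arXiv:1909.02022 — 14 statements merged into one kernel-verified Lean document; each statement's English description precedes it below -/
import Mathlib

section
/- If x_1, ..., x_n are positive integers satisfying 1/x_1 + ... + 1/x_n = 1, and L = lcm(x_1, ..., x_n), then the positive integers r_i = L / x_i satisfy: each r_j divides r_1 + ... + r_n, and gcd(r_1, ..., r_n) = 1. -/
theorem stmt_1 (n : ℕ) (x : Fin n → ℕ) (hpos : ∀ i, 0 < x i)
    (hsum : ∑ i, (1 : ℚ) / (x i : ℚ) = 1) :
    (∀ i, 0 < Finset.univ.lcm x / x i) ∧
    (∀ j, Finset.univ.lcm x / x j ∣ ∑ i, Finset.univ.lcm x / x i) ∧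
    Finset.univ.gcd (fun i => Finset.univ.lcm x / x i) = 1 := by
  rcases Nat.eq_zero_or_pos n with hn | hn
  · subst hn; simp at hsum
  set L := Finset.univ.lcm x with hLdef
  have hdvd : ∀ i, x i ∣ L := fun i => Finset.dvd_lcm (Finset.mem_univ i)
  have hL : 0 < L := by
    rw [Nat.pos_iff_ne_zero]
    intro h
    rw [hLdef] at h
    rcases (Finset.lcm_eq_zero_iff).mp h with ⟨i, _, hi⟩
    exact (hpos i).ne' hi
  have hrpos : ∀ i, 0 < L / x i := fun i =>
    Nat.div_pos (Nat.le_of_dvd hL (hdvd i)) (hpos i)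
  -- sum of r_i equals L
  have hsumL : ∑ i, L / x i = L := by
    have hcast : ((∑ i, L / x i : ℕ) : ℚ) = (L : ℚ) := by
      push_cast
      rw [Finset.sum_congr rfl (fun i _ => Nat.cast_div (hdvd i)
        (by exact_mod_cast (hpos i).ne'))]
      calc ∑ i, (L : ℚ) / (x i : ℚ) = (L : ℚ) * ∑ i, 1 / (x i : ℚ) := by
            rw [Finset.mul_sum]; congr 1; ext i; ring
        _ = L := by rw [hsum, mul_one]
    exact_mod_cast hcast
  refine ⟨hrpos, fun j => ?_, ?_⟩
  · rw [hsumL]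
    exact Nat.div_dvd_of_dvd (hdvd j)
  · set d := Finset.univ.gcd (fun i => L / x i) with hd
    have hddvd : ∀ i, d ∣ L / x i := fun i => Finset.gcd_dvd (Finset.mem_univ i)
    have i0 : Fin n := ⟨0, hn⟩
    have hdpos : 0 < d := Nat.pos_of_dvd_of_pos (hddvd i0) (hrpos i0)
    have hxdvd : ∀ i, x i ∣ L / d := by
      intro i
      obtain ⟨m, hm⟩ := hddvd i
      refine ⟨m, ?_⟩
      have : L = d * m * x i := by
        rw [← hm, Nat.div_mul_cancel (hdvd i)]
      rw [this, Nat.mul_assoc, Nat.mul_div_cancel_left _ hdpos, Nat.mul_comm]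
    have hLdvd : L ∣ L / d := Finset.lcm_dvd (fun i _ => hxdvd i)
    have hle : L / d ≤ L := Nat.div_le_self _ _
    have heq : L / d = L := Nat.le_antisymm hle (Nat.le_of_dvd
      (Nat.div_pos (Nat.le_of_dvd hL (dvd_trans (hddvd i0)
        (Nat.div_dvd_of_dvd (hdvd i0)))) hdpos) hLdvd)
    rcases (Nat.div_eq_self).mp heq with h | h
    · exact absurd h hL.ne'
    · exact h
end

section
/- For every positive integer c with c \le n - 1, there exists an arithmetical structure on K_n whose maximum value is c. Concretely, taking n - c copies of c together with c copies of 1 gives such a structure. -/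
/-- An arithmetical structure on `K n`. -/
def IsArithStruct (n : ℕ) (r : Fin n → ℕ) : Prop :=
  (∀ i, 0 < r i) ∧ Finset.univ.gcd r = 1 ∧ ∀ j, r j ∣ ∑ i, r i

theorem stmt_3 (n c : ℕ) (hn : 2 ≤ n) (hc : 0 < c) (hcn : c ≤ n - 1) :
    ∃ r : Fin n → ℕ, IsArithStruct n r ∧ (∀ i, r i ≤ c) ∧ (∃ i, r i = c) := by
  refine ⟨fun i => if (i : ℕ) < n - c then c else 1, ?_, ?_, ?_⟩
  · refine ⟨fun i => ?_, ?_, fun j => ?_⟩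
    · dsimp only; split <;> omega
    · -- the last index has value 1
      have hlast : ((⟨n - 1, by omega⟩ : Fin n) : ℕ) = n - 1 := rfl
      have h1 : (if ((⟨n - 1, by omega⟩ : Fin n) : ℕ) < n - c then c else 1) = 1 := by
        rw [hlast, if_neg (by omega)]
      have := Finset.gcd_dvd (Finset.mem_univ (⟨n - 1, by omega⟩ : Fin n))
        (f := fun i : Fin n => if (i : ℕ) < n - c then c else 1)
      simp only [h1] at this
      exact Nat.eq_one_of_dvd_one this
    · -- sum computation
      have hsum : ∑ i : Fin n, (if (i : ℕ) < n - c then c else 1) = (n - c) * c + c := by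
        rw [Finset.sum_ite]
        have h1 : (Finset.univ.filter fun i : Fin n => (i : ℕ) < n - c).card = n - c := by
          have : (Finset.univ.filter fun i : Fin n => (i : ℕ) < n - c)
              = Finset.map (Fin.castLEEmb (by omega : n - c ≤ n)) Finset.univ := by
            ext i
            simp [Fin.castLEEmb, Fin.ext_iff]
            constructor
            · intro h; exact ⟨⟨i, h⟩, rfl⟩
            · rintro ⟨j, hj⟩; rw [← hj]; exact j.2
          simp [this]
        have h2 : (Finset.univ.filter fun i : Fin n => ¬ (i : ℕ) < n - c).card = c := by
          have := Finset.card_filter_add_card_filter_not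
            (s := (Finset.univ : Finset (Fin n))) (p := fun i : Fin n => (i : ℕ) < n - c)
          simp only [Finset.card_univ, Fintype.card_fin] at this
          omega
        rw [Finset.sum_const, Finset.sum_const, smul_eq_mul, smul_eq_mul, h1, h2, mul_one]
      rw [hsum]
      dsimp only; split
      · exact ⟨n - c + 1, by ring⟩
      · exact one_dvd _
  · intro i; dsimp only; split <;> omega
  · refine ⟨⟨0, by omega⟩, ?_⟩
    simp only [Fin.val_mk]
    rw [if_pos (by omega)]
end

section
/- Let k be a nonnegative integer and \ell a positive integer with k \le \ell. Every integer c satisfying \ell \le c \le (\ell - k + 1)\,2^k - 1 can be written as a sum c = 2^{k_1} + 2^{k_2} + ... + 2^{k_\ell} where each k_j \in \{0, 1, ..., k\} and at least one k_j equals 0. -/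
/-!
Induct on `k`, and for fixed `k` on `ℓ`. If `c` is large, `c - 2 ^ k` lies in the range for
`ℓ - 1` summands and the summand `2 ^ k` is split off. Otherwise `c` already lies in the range
for exponents at most `k - 1`; this is the inequality `ℓ - 1 ≤ (ℓ - k) 2 ^ (k - 1)`, which
follows from `2 ^ (k - 1) ≥ k`.
-/

open Finset

def PowTwoRep (ℓ k c : ℕ) : Prop :=
  ∃ f : Fin ℓ → ℕ, (∀ j, f j ≤ k) ∧ (∃ j, f j = 0) ∧ ∑ j, 2 ^ f j = c

namespace PowTwoRep

theorem exp_zero {ℓ : ℕ} (hℓ : 0 < ℓ) : PowTwoRep ℓ 0 ℓ :=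
  ⟨fun _ ↦ 0, fun _ ↦ le_rfl, ⟨⟨0, hℓ⟩, rfl⟩, by simp⟩

theorem mono {ℓ k k' c : ℕ} (h : PowTwoRep ℓ k c) (hk : k ≤ k') : PowTwoRep ℓ k' c :=
  let ⟨f, hf, h0, hsum⟩ := h
  ⟨f, fun j ↦ (hf j).trans hk, h0, hsum⟩

theorem cons {ℓ k c i : ℕ} (h : PowTwoRep ℓ k c) (hi : i ≤ k) :
    PowTwoRep (ℓ + 1) k (c + 2 ^ i) := by
  obtain ⟨f, hf, ⟨j, hj⟩, hsum⟩ := h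
  refine ⟨Fin.cons i f, fun j ↦ Fin.cases hi hf j, ⟨j.succ, by simpa using hj⟩, ?_⟩
  rw [Fin.sum_univ_succ, ← hsum]
  simp [add_comm]

end PowTwoRep

theorem lt_sub_add_one_mul_of_lt_sub_mul_two_mul {k ℓ c p : ℤ} (hk : 0 ≤ k) (hp : k + 1 ≤ p)
    (hupper : c < (ℓ - k) * (2 * p)) (hsmall : c + 1 < 2 * p + ℓ) :
    c < (ℓ - k + 1) * p := by
  rcases lt_trichotomy (ℓ - k) 1 with hm | hm | hm
  · nlinarith
  · rw [hm] at hupper ⊢; linarith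
  · nlinarith

theorem powTwoRep_of_le_of_lt (k ℓ c : ℕ) (hℓ : 0 < ℓ) (hc1 : ℓ ≤ c)
    (hc2 : (c : ℤ) < ((ℓ : ℤ) - k + 1) * 2 ^ k) : PowTwoRep ℓ k c := by
  induction k generalizing ℓ c with
  | zero =>
    obtain rfl : c = ℓ := by push_cast at hc2; omega
    exact PowTwoRep.exp_zero hℓ
  | succ k ihk =>
    induction ℓ generalizing c with
    | zero => omega
    | succ ℓ ihℓ =>
      have hp : (2 : ℤ) ^ (k + 1) = 2 * 2 ^ k := pow_succ' 2 k
      by_cases hlarge : 2 ^ (k + 1) + ℓ ≤ c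
      · obtain ⟨c, rfl⟩ : ∃ c', c = c' + 2 ^ (k + 1) := ⟨c - 2 ^ (k + 1), by omega⟩
        have hℓ : 0 < ℓ := by
          refine Nat.pos_of_ne_zero fun hℓ ↦ ?_
          subst hℓ
          push_cast at hc2
          nlinarith [pow_pos (two_pos : (0 : ℤ) < 2) (k + 1)]
        refine (ihℓ c hℓ (by omega) ?_).cons le_rfl
        push_cast at hc2 ⊢
        linarith
      · refine (ihk (ℓ + 1) c hℓ hc1 ?_).mono k.le_succ
        have hpow : (k : ℤ) + 1 ≤ 2 ^ k := by exact_mod_cast k.lt_two_pow_self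
        have hsmall : (c : ℤ) + 1 < 2 * 2 ^ k + (ℓ + 1 : ℕ) := by
          rw [← hp]; exact_mod_cast (by omega : c + 1 < 2 ^ (k + 1) + (ℓ + 1))
        push_cast at hc2 hsmall ⊢
        refine lt_sub_add_one_mul_of_lt_sub_mul_two_mul (by positivity) hpow ?_ hsmall
        rw [← hp]; linarith

theorem stmt_4_general (k ℓ c : ℕ) (hℓ : 0 < ℓ)
    (hc1 : ℓ ≤ c) (hc2 : (c : ℤ) ≤ ((ℓ : ℤ) - k + 1) * 2 ^ k - 1) :
    ∃ f : Fin ℓ → ℕ, (∀ j, f j ≤ k) ∧ (∃ j, f j = 0) ∧ ∑ j, 2 ^ f j = c :=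
  powTwoRep_of_le_of_lt k ℓ c hℓ hc1 (by linarith)

theorem stmt_4 (k ℓ c : ℕ) (hℓ : 0 < ℓ) (hkℓ : k ≤ ℓ)
    (hc1 : ℓ ≤ c) (hc2 : (c : ℤ) ≤ ((ℓ : ℤ) - k + 1) * 2 ^ k - 1) :
    ∃ f : Fin ℓ → ℕ, (∀ j, f j ≤ k) ∧ (∃ j, f j = 0) ∧ ∑ j, 2 ^ f j = c :=
  stmt_4_general k ℓ c hℓ hc1 hc2
end

section
/- Let k be a nonnegative integer and \ell a positive integer with k \le \ell. Every odd integer c satisfying \ell \le c \le (\ell - k + 2)\,2^k - 3 can be written as a sum c = 2^{k_1} + ... + 2^{k_\ell} where each k_j \in \{0, 1, ..., k\} and at least one k_j equals 0. -/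
private lemma two_mul_le_two_pow : ∀ m : ℕ, 2 ≤ m → 2 * m ≤ 2 ^ m := by
  intro m hm
  induction m with
  | zero => omega
  | succ n ih =>
      rcases Nat.lt_or_ge n 2 with h | h
      · interval_cases n <;> simp <;> omega
      · have := ih h
        have : 1 ≤ 2 ^ n := Nat.one_le_two_pow
        rw [pow_succ]
        omega

private lemma aux : ∀ n k ℓ c : ℕ, ℓ + k ≤ n → 0 < ℓ → Odd c → ℓ ≤ c →
    (c : ℤ) ≤ ((ℓ : ℤ) - k + 2) * 2 ^ k - 3 →
    ∃ f : Fin ℓ → ℕ, (∀ j, f j ≤ k) ∧ (∃ j, f j = 0) ∧ ∑ j, 2 ^ f j = c := by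
  intro n
  induction n with
  | zero => intro k ℓ c hn hℓ _ _ _; omega
  | succ n ih =>
    intro k ℓ c hn hℓ hodd hc1 hc2
    rcases eq_or_lt_of_le hc1 with hc | hc
    · refine ⟨fun _ => 0, fun j => Nat.zero_le _, ⟨⟨0, hℓ⟩, rfl⟩, ?_⟩
      simpa using hc
    · -- c ≥ ℓ + 1
      rcases Nat.eq_zero_or_pos k with hk0 | hkpos
      · exfalso; subst hk0; simp at hc2; omega
      obtain ⟨m, rfl⟩ : ∃ m, k = m + 1 := ⟨k - 1, by omega⟩
      have hK : ((2:ℤ)) ^ (m+1) = 2 * 2 ^ m := by ring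
      have htpos : (0:ℤ) < 2 ^ m := by positivity
      rcases Nat.lt_or_ge c (ℓ - 1 + 2 ^ (m+1)) with hsmall | hbig
      · -- lower k to m
        have hsmall' : (c : ℤ) ≤ (ℓ : ℤ) + 2 * 2 ^ m - 2 := by
          have h2 : c + 2 ≤ ℓ + 2 * 2 ^ m := by omega
          push_cast at h2; linarith
        have hc2' : (c : ℤ) ≤ ((ℓ : ℤ) - m + 2) * 2 ^ m - 3 := by
          obtain ⟨d, hd⟩ := hodd
          have hd' : (c:ℤ) = 2 * d + 1 := by exact_mod_cast hd
          have hc' : (ℓ:ℤ) + 1 ≤ c := by exact_mod_cast hc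
          have hB : (c:ℤ) ≤ ((ℓ:ℤ) - m + 1) * (2 * 2 ^ m) - 3 := by
            push_cast at hc2
            have hkey : ((ℓ:ℤ) - ((m:ℤ)+1) + 2) * 2 ^ (m+1) = ((ℓ:ℤ) - m + 1) * (2 * 2 ^ m) := by
              ring
            linarith
          rcases Nat.lt_or_ge m 2 with hm2 | hm2
          · interval_cases m <;> simp at hsmall' hB ⊢ <;> omega
          · -- m ≥ 2
            have ht2m : (2 * m : ℤ) ≤ 2 ^ m := by exact_mod_cast two_mul_le_two_pow m hm2
            set t : ℤ := 2 ^ m with htdef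
            set B : ℤ := (ℓ:ℤ) - m with hBdef
            rcases le_or_gt B 0 with hB0 | hB0
            · have hBt : B * t ≤ 0 := mul_nonpos_of_nonpos_of_nonneg hB0 (le_of_lt htpos)
              have e1 : ((ℓ:ℤ) - m + 1) * (2 * t) - 3 = 2 * (B * t) + 2 * t - 3 := by
                rw [hBdef]; ring
              have e2 : ((ℓ:ℤ) - m + 2) * t - 3 = B * t + 2 * t - 3 := by
                rw [hBdef]; ring
              rw [e2]; rw [e1] at hB; linarith
            · have hB1 : 1 ≤ B := hB0
              have h1 : 1 * (t - 1) ≤ B * (t - 1) := by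
                apply mul_le_mul_of_nonneg_right hB1; linarith
              have hm' : (2:ℤ) ≤ m := by exact_mod_cast hm2
              have e2 : ((ℓ:ℤ) - m + 2) * t - 3 = B * t + 2 * t - 3 := by
                rw [hBdef]; ring
              rw [e2]
              -- B*t ≥ B + t - 1 ≥ ℓ - m + 2m - 1 = ℓ + m - 1 ≥ ℓ + 1
              nlinarith
        obtain ⟨f, hf1, hf2, hf3⟩ := ih m ℓ c (by omega) hℓ hodd hc1 hc2'
        exact ⟨f, fun j => le_trans (hf1 j) (by omega), hf2, hf3⟩
      · -- use a 2^(m+1) term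
        have hpow1 : 1 ≤ 2 ^ (m+1) := Nat.one_le_two_pow
        have hpowm : (1:ℕ) ≤ 2 ^ m := Nat.one_le_two_pow
        have hcK : 2 ^ (m+1) ≤ c := by omega
        have hℓ2 : 2 ≤ ℓ := by
          by_contra h
          have hℓ1 : ℓ = 1 := by omega
          subst hℓ1
          have hcK' : ((2:ℤ)) ^ (m+1) ≤ (c:ℤ) := by exact_mod_cast hcK
          have hc2' : (c:ℤ) ≤ ((1:ℤ) - ((m:ℤ)+1) + 2) * 2 ^ (m+1) - 3 := by
            push_cast at hc2 ⊢; linarith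
          rcases Nat.lt_or_ge m 1 with hm1 | hm1
          · interval_cases m <;> simp at hc2' hcK' <;> omega
          · have hfac : (1:ℤ) - ((m:ℤ)+1) + 2 ≤ 1 := by omega
            have hmono := mul_le_mul_of_nonneg_right hfac
              (show (0:ℤ) ≤ 2 ^ (m+1) by positivity)
            rw [one_mul] at hmono
            linarith
        obtain ⟨m', rfl⟩ : ∃ m', ℓ = m' + 1 := ⟨ℓ - 1, by omega⟩
        have hm'pos : 0 < m' := by omega
        have hpownat : (2:ℕ) ^ (m+1) = 2 * 2 ^ m := by ring
        have hodd' : Odd (c - 2 ^ (m+1)) := by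
          obtain ⟨d, hd⟩ := hodd
          exact ⟨d - 2 ^ m, by omega⟩
        have hc1' : m' ≤ c - 2 ^ (m+1) := by omega
        have hc2'' : ((c - 2 ^ (m+1) : ℕ) : ℤ) ≤ ((m' : ℤ) - (m+1) + 2) * 2 ^ (m+1) - 3 := by
          have hcast : ((c - 2 ^ (m+1) : ℕ) : ℤ) = (c:ℤ) - 2 ^ (m+1) := by
            push_cast [Nat.cast_sub hcK]; ring
          rw [hcast]
          push_cast at hc2
          have hkey : ((m':ℤ) + 1 - ((m:ℤ)+1) + 2) * 2 ^ (m+1)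
              = ((m':ℤ) - ((m:ℤ)+1) + 2) * 2 ^ (m+1) + 2 ^ (m+1) := by ring
          push_cast
          linarith
        obtain ⟨f, hf1, ⟨j0, hj0⟩, hf3⟩ :=
          ih (m+1) m' (c - 2 ^ (m+1)) (by omega) hm'pos hodd' hc1' hc2''
        refine ⟨Fin.cons (m+1) f, ?_, ⟨j0.succ, by simp [hj0]⟩, ?_⟩
        · intro j
          refine Fin.cases ?_ ?_ j
          · simp
          · intro i; simpa using hf1 i
        · rw [Fin.sum_univ_succ]
          simp only [Fin.cons_zero, Fin.cons_succ]
          rw [hf3]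
          omega

theorem stmt_5 (k ℓ c : ℕ) (hℓ : 0 < ℓ) (hkℓ : k ≤ ℓ) (hodd : Odd c)
    (hc1 : ℓ ≤ c) (hc2 : (c : ℤ) ≤ ((ℓ : ℤ) - k + 2) * 2 ^ k - 3) :
    ∃ f : Fin ℓ → ℕ, (∀ j, f j ≤ k) ∧ (∃ j, f j = 0) ∧ ∑ j, 2 ^ f j = c := by
  exact aux (ℓ + k) k ℓ c le_rfl hℓ hodd hc1 hc2
end

section
/- Fix n \ge 2. For any positive integer k with k + 2^k - 1 \le n and any positive integer c with n - 2^k + 1 \le c \le (n - k - 2^k + 2)\,2^k - 1, there exists an arithmetical structure on K_n whose maximum value is c. -/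
namespace List

theorem exists_sum_eq_of_lt_two_pow :
    ∀ {k r : ℕ}, r < 2 ^ k → ∃ L : List ℕ, (∀ x ∈ L, x ∣ 2 ^ k) ∧ L.sum = r ∧
      L.length ≤ k ∧ (L.length = k → r + 1 = 2 ^ k)
  | 0, r, hr => ⟨[], by simp, by simp_all, by simp, by simp_all⟩
  | k + 1, r, hr => by
    have hpow : 2 ^ (k + 1) = 2 * 2 ^ k := by ring
    have hdvd : ∀ x, x ∣ 2 ^ k → x ∣ 2 ^ (k + 1) := fun x hx =>
      hx.trans (pow_dvd_pow 2 k.le_succ)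
    by_cases hlow : r < 2 ^ k
    · obtain ⟨L, hL, hsum, hlen, -⟩ := exists_sum_eq_of_lt_two_pow hlow
      exact ⟨L, fun x hx => hdvd x (hL x hx), hsum, by omega, by omega⟩
    · obtain ⟨L, hL, hsum, hlen, htop⟩ :=
        exists_sum_eq_of_lt_two_pow (k := k) (r := r - 2 ^ k) (by omega)
      refine ⟨2 ^ k :: L, ?_, by simp only [sum_cons]; omega, by simp; omega,
        fun h => by simp at h; omega⟩
      simp only [mem_cons, forall_eq_or_imp]
      exact ⟨hdvd _ dvd_rfl, fun x hx => hdvd x (hL x hx)⟩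

theorem exists_length_succ_of_length_lt_sum {k : ℕ} :
    ∀ {L : List ℕ}, (∀ x ∈ L, x ∣ 2 ^ k) → L.length < L.sum →
      ∃ M : List ℕ, (∀ x ∈ M, x ∣ 2 ^ k) ∧ M.sum = L.sum ∧ M.length = L.length + 1
  | [], _, h => by simp at h
  | x :: t, hL, hlt => by
    simp only [mem_cons, forall_eq_or_imp] at hL
    obtain ⟨hx, ht⟩ := hL
    by_cases hx1 : x = 1
    · subst hx1
      obtain ⟨M, hM, hsum, hlen⟩ :=
        exists_length_succ_of_length_lt_sum ht (by simp only [length_cons, sum_cons] at hlt; omega)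
      exact ⟨1 :: M, by simpa using hM, by simp [hsum], by simp [hlen]⟩
    · have heven : 2 ∣ x := by
        obtain ⟨j, -, rfl⟩ := (Nat.dvd_prime_pow Nat.prime_two).1 hx
        exact dvd_pow_self 2 (by rintro rfl; simp at hx1)
      have hhalf : x / 2 ∣ 2 ^ k := (Nat.div_dvd_of_dvd heven).trans hx
      refine ⟨x / 2 :: x / 2 :: t, ?_, by simp only [sum_cons]; omega, by simp⟩
      simp only [mem_cons, forall_eq_or_imp]
      exact ⟨hhalf, hhalf, ht⟩

theorem exists_length_eq_of_length_le_of_le_sum {k m : ℕ} {L : List ℕ}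
    (hL : ∀ x ∈ L, x ∣ 2 ^ k) (hlen : L.length ≤ m) (hsum : m ≤ L.sum) :
    ∃ M : List ℕ, (∀ x ∈ M, x ∣ 2 ^ k) ∧ M.sum = L.sum ∧ M.length = m := by
  obtain ⟨d, rfl⟩ := Nat.exists_eq_add_of_le hlen
  induction d generalizing L with
  | zero => exact ⟨L, hL, rfl, rfl⟩
  | succ d ih =>
    obtain ⟨M, hM, hMsum, hMlen⟩ := exists_length_succ_of_length_lt_sum hL (by omega)
    obtain ⟨N, hN, hNsum, hNlen⟩ := ih hM (by omega) (by omega)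
    exact ⟨N, hN, hNsum.trans hMsum, by omega⟩

theorem exists_one_mem_sum_eq_length_eq {k ℓ c : ℕ} (hkℓ : k ≤ ℓ) (hℓ : 0 < ℓ)
    (hℓc : ℓ ≤ c) (hc : c < (ℓ - k + 1) * 2 ^ k) :
    ∃ M : List ℕ, (∀ x ∈ M, x ∣ 2 ^ k) ∧ M.sum = c ∧ M.length = ℓ ∧ 1 ∈ M := by
  have hpos : 0 < 2 ^ k := by positivity
  set q := (c - 1) / 2 ^ k
  set r := (c - 1) % 2 ^ k
  have hdiv : 2 ^ k * q + r = c - 1 := Nat.div_add_mod _ _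
  have hq : q ≤ ℓ - k := by
    have : (c - 1) / 2 ^ k < ℓ - k + 1 := (Nat.div_lt_iff_lt_mul hpos).2 (by omega)
    omega
  obtain ⟨R, hR, hRsum, hRlen, hRtop⟩ := exists_sum_eq_of_lt_two_pow (Nat.mod_lt (c - 1) hpos)
  have hlen : q + R.length ≤ ℓ - 1 := by
    rcases hRlen.lt_or_eq with hlt | heq
    · omega
    · have hr := hRtop heq
      rw [add_mul, one_mul, mul_comm] at hc
      have : q < ℓ - k := Nat.lt_of_mul_lt_mul_left (a := 2 ^ k) (by omega)
      omega
  obtain ⟨M, hM, hMsum, hMlen⟩ := exists_length_eq_of_length_le_of_le_sum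
    (k := k) (m := ℓ - 1) (L := replicate q (2 ^ k) ++ R)
    (by simpa [or_imp, forall_and] using fun x hx => hR x hx)
    (by simpa using hlen)
    (by simp only [sum_append, sum_replicate, smul_eq_mul, hRsum]; rw [mul_comm]; omega)
  refine ⟨1 :: M, ?_, ?_, by simp; omega, mem_cons_self⟩
  · simpa using hM
  · simp only [sum_cons, hMsum, sum_append, sum_replicate, smul_eq_mul, hRsum]
    rw [mul_comm]; omega

end List

theorem isArithStruct_get {L : List ℕ} (hpos : ∀ x ∈ L, 0 < x)
    (hdvd : ∀ x ∈ L, x ∣ L.sum) (hone : 1 ∈ L) : IsArithStruct L.length L.get := by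
  have hsum : ∑ i, L.get i = L.sum := by
    rw [← List.sum_ofFn, List.ofFn_get]
  refine ⟨fun i => hpos _ (L.get_mem i), ?_, fun j => hsum ▸ hdvd _ (L.get_mem j)⟩
  obtain ⟨i, hi⟩ := List.mem_iff_get.1 hone
  exact Nat.dvd_one.1 (hi ▸ Finset.gcd_dvd (Finset.mem_univ i))

theorem exists_isArithStruct_of_sum_eq {n k c : ℕ} {M : List ℕ} (hk : 0 < k)
    (hM : ∀ x ∈ M, x ∣ 2 ^ k) (hsum : M.sum = c) (hone : 1 ∈ M)
    (hn : 2 ^ k - 1 + M.length = n) :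
    ∃ r : Fin n → ℕ, IsArithStruct n r ∧ (∀ i, r i ≤ c) ∧ ∃ i, r i = c := by
  set L := List.replicate (2 ^ k - 1) c ++ M
  have hLsum : L.sum = 2 ^ k * c := by
    simp only [L, List.sum_append, List.sum_replicate, smul_eq_mul, hsum]
    rw [← add_one_mul, Nat.sub_add_cancel Nat.one_le_two_pow]
  have hmem : ∀ x ∈ L, x = c ∨ x ∈ M := by
    simp only [L, List.mem_append, List.mem_replicate]; tauto
  have hc : c ∈ L := by
    have := Nat.one_lt_two_pow hk.ne'
    exact List.mem_append_left _ (List.mem_replicate.2 ⟨by omega, rfl⟩)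
  have hcpos : 0 < c := hsum ▸ List.le_sum_of_mem hone
  obtain rfl : L.length = n := by simpa [L] using hn
  refine ⟨L.get, isArithStruct_get ?_ ?_ (List.mem_append_right _ hone), ?_, ?_⟩
  · intro x hx
    rcases hmem x hx with rfl | hx
    exacts [hcpos, Nat.pos_of_dvd_of_pos (hM x hx) (by positivity)]
  · intro x hx
    rw [hLsum]
    rcases hmem x hx with rfl | hx
    exacts [dvd_mul_left _ _, (hM x hx).mul_right c]
  · intro i
    rcases hmem _ (L.get_mem i) with h | h
    exacts [h.le, hsum ▸ List.le_sum_of_mem h]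
  · exact List.mem_iff_get.1 hc

theorem stmt_6_general (n k c : ℕ) (hk : 0 < k)
    (hkn : k + 2 ^ k - 1 ≤ n)
    (hc1 : (n : ℤ) - 2 ^ k + 1 ≤ c)
    (hc2 : (c : ℤ) ≤ ((n : ℤ) - k - 2 ^ k + 2) * 2 ^ k - 1) :
    ∃ r : Fin n → ℕ, IsArithStruct n r ∧ (∀ i, r i ≤ c) ∧ (∃ i, r i = c) := by
  set ℓ := n + 1 - 2 ^ k with hℓ
  have hℓz : (ℓ : ℤ) = n + 1 - 2 ^ k := by
    rw [hℓ]; push_cast [Nat.cast_sub (by omega : 2 ^ k ≤ n + 1)]; ring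
  have hkℓ : k ≤ ℓ := by omega
  have hℓc : ℓ ≤ c := by zify; linarith
  have hcℓ : c < (ℓ - k + 1) * 2 ^ k := by zify [hkℓ]; rw [hℓz]; linarith
  obtain ⟨M, hM, hsum, hlen, hone⟩ :=
    List.exists_one_mem_sum_eq_length_eq hkℓ (by omega) hℓc hcℓ
  have := Nat.one_le_two_pow (n := k)
  exact exists_isArithStruct_of_sum_eq hk hM hsum hone (by omega)

theorem stmt_6 (n k c : ℕ) (hn : 2 ≤ n) (hk : 0 < k)
    (hkn : k + 2 ^ k - 1 ≤ n) (hc : 0 < c)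
    (hc1 : (n : ℤ) - 2 ^ k + 1 ≤ c)
    (hc2 : (c : ℤ) ≤ ((n : ℤ) - k - 2 ^ k + 2) * 2 ^ k - 1) :
    ∃ r : Fin n → ℕ, IsArithStruct n r ∧ (∀ i, r i ≤ c) ∧ (∃ i, r i = c) :=
  stmt_6_general n k c hk hkn hc1 hc2
end

section
/- Fix n \ge 2. For any positive integer k with k + 2^k - 1 \le n and any prime p with n - 2^k + 1 \le p \le (n - k - 2^k + 3)\,2^k - 3, there exists an arithmetical structure on K_n whose maximum value is p. -/
/-! Take `2 ^ k - 1` copies of `p` together with `m = n - 2 ^ k + 1` powers of two, each at most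
`2 ^ k`, summing to `p`. The total is `2 ^ k * p`, which every entry divides, and the gcd divides
the prime `p` but is not `p`, since `n` positive multiples of `p` would sum to at least
`n * p > 2 ^ k * p`. The powers of two exist: writing `p = q * 2 ^ k + r` with `r < 2 ^ k`,
`q` copies of `2 ^ k` and the binary digits of `r` use at most `m` parts by the bound on `p`, and
splitting a part `2 ^ (a + 1)` into two parts `2 ^ a` adds parts one at a time up to `p`. -/

def HasPowTwoPartition (k m p : ℕ) : Prop :=
  ∃ e : Fin m → ℕ, (∀ j, e j ≤ k) ∧ ∑ j, 2 ^ e j = p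

namespace HasPowTwoPartition

variable {k m p : ℕ}

theorem zero (k : ℕ) : HasPowTwoPartition k 0 0 :=
  ⟨Fin.elim0, fun j => j.elim0, rfl⟩

theorem cons {a : ℕ} (h : HasPowTwoPartition k m p) (ha : a ≤ k) :
    HasPowTwoPartition k (m + 1) (2 ^ a + p) := by
  obtain ⟨e, hek, rfl⟩ := h
  exact ⟨Fin.cons a e, Fin.cases ha hek, Fin.sum_univ_succ _⟩

theorem add_mul (h : HasPowTwoPartition k m p) (q : ℕ) :
    HasPowTwoPartition k (m + q) (q * 2 ^ k + p) := by
  induction q with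
  | zero => simpa using h
  | succ q ih => simpa [← add_assoc, Nat.add_mul, add_comm] using ih.cons le_rfl

theorem succ_of_lt (h : HasPowTwoPartition k m p) (hmp : m < p) :
    HasPowTwoPartition k (m + 1) p := by
  obtain ⟨e, hek, rfl⟩ := h
  obtain ⟨j, hj⟩ : ∃ j, e j ≠ 0 := by
    by_contra! he
    simp [he] at hmp
  classical
  set a := e j - 1
  have hak : a ≤ k := (Nat.sub_le _ _).trans (hek j)
  have hsplit : 2 ^ e j = 2 ^ a + 2 ^ a := by
    rw [← two_mul, ← pow_succ', Nat.sub_add_cancel (Nat.one_le_iff_ne_zero.2 hj)]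
  have hupd : ∀ i, Function.update e j a i ≤ k := by
    intro i
    rcases eq_or_ne i j with rfl | hi
    · simpa using hak
    · simpa [hi] using hek i
  refine ⟨Fin.cons a (Function.update e j a), Fin.cases hak (by simpa using hupd), ?_⟩
  rw [Fin.sum_univ_succ, Fin.cons_zero]
  simp only [Fin.cons_succ, Function.apply_update (fun _ b => 2 ^ b),
    Finset.sum_update_of_mem (Finset.mem_univ j)]
  rw [Finset.sum_eq_add_sum_sdiff_singleton_of_mem (Finset.mem_univ j), hsplit]
  ring

theorem of_le {m' : ℕ} (h : HasPowTwoPartition k m p) (hm : m ≤ m') (hm' : m' ≤ p) :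
    HasPowTwoPartition k m' p := by
  induction m', hm using Nat.le_induction with
  | base => exact h
  | succ m' _ ih => exact (ih (by omega)).succ_of_lt (by omega)

end HasPowTwoPartition

theorem exists_hasPowTwoPartition_of_lt_two_pow {k r : ℕ} (hr : r < 2 ^ k) :
    ∃ c, 2 ^ c ≤ r + 1 ∧ HasPowTwoPartition k c r := by
  induction r using Nat.strong_induction_on with
  | _ r ih =>
    rcases Nat.eq_zero_or_pos r with rfl | hr0
    · exact ⟨0, le_rfl, HasPowTwoPartition.zero k⟩
    set a := Nat.log 2 r
    have hle : 2 ^ a ≤ r := Nat.pow_log_le_self 2 hr0.ne'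
    have hlt : r < 2 ^ (a + 1) := Nat.lt_pow_succ_log_self one_lt_two r
    have hak : a < k := (Nat.pow_lt_pow_iff_right one_lt_two).1 (hle.trans_lt hr)
    obtain ⟨c, hc, hrest⟩ := ih (r - 2 ^ a) (by have := Nat.two_pow_pos a; omega) (by omega)
    refine ⟨c + 1, ?_, by simpa [hle] using hrest.cons hak.le⟩
    rw [pow_succ] at hlt ⊢
    omega

theorem hasPowTwoPartition_of_lt {k m p : ℕ} (hmp : m ≤ p) (hp : p + 1 < (m + 2 - k) * 2 ^ k) :
    HasPowTwoPartition k m p := by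
  obtain ⟨q, r, hr, rfl⟩ : ∃ q r, r < 2 ^ k ∧ p = q * 2 ^ k + r :=
    ⟨p / 2 ^ k, p % 2 ^ k, Nat.mod_lt p (Nat.two_pow_pos k), (Nat.div_add_mod' p _).symm⟩
  obtain ⟨c, hc, hrem⟩ := exists_hasPowTwoPartition_of_lt_two_pow hr
  refine (hrem.add_mul q).of_le ?_ hmp
  have hck : c ≤ k := (Nat.pow_le_pow_iff_right one_lt_two).1 (by omega)
  have hq : q < m + 2 - k := Nat.lt_of_mul_lt_mul_right (a := 2 ^ k) (by omega)
  rcases hck.lt_or_eq with hck | rfl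
  · omega
  · have : q + 1 < m + 2 - c :=
      Nat.lt_of_mul_lt_mul_right (a := 2 ^ c) (by rw [Nat.add_mul]; omega)
    omega

theorem Finset.gcd_univ_eq_one_of_prime_of_sum_lt {ι : Type*} [Fintype ι] {r : ι → ℕ} {p : ℕ}
    (hpos : ∀ i, 0 < r i) (hp : p.Prime) (hmem : ∃ i, r i = p)
    (hsum : ∑ i, r i < Fintype.card ι * p) : Finset.univ.gcd r = 1 := by
  obtain ⟨i, hi⟩ := hmem
  refine ((hp.eq_one_or_self_of_dvd _ (hi ▸ Finset.gcd_dvd (Finset.mem_univ i))).resolve_right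
    fun hgcd => hsum.not_ge ?_)
  have hle : ∀ j ∈ Finset.univ, p ≤ r j := fun j _ =>
    Nat.le_of_dvd (hpos j) (hgcd ▸ Finset.gcd_dvd (Finset.mem_univ j))
  simpa using Finset.card_nsmul_le_sum _ _ _ hle

theorem exists_isArithStruct_of_hasPowTwoPartition {k m p : ℕ} (hk : 0 < k) (hm : 2 ≤ m)
    (hp : p.Prime) (h : HasPowTwoPartition k m p) :
    ∃ r : Fin (2 ^ k - 1 + m) → ℕ, IsArithStruct _ r ∧ (∀ i, r i ≤ p) ∧ ∃ i, r i = p := by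
  obtain ⟨e, hek, hesum⟩ := h
  have hk2 : 2 ≤ 2 ^ k := Nat.le_self_pow hk.ne' 2
  set r : Fin (2 ^ k - 1 + m) → ℕ := Fin.append (fun _ => p) (fun j => 2 ^ e j)
  have hrsum : ∑ i, r i = 2 ^ k * p := by
    simp only [r, Fin.sum_univ_add, Fin.append_left, Fin.append_right, hesum,
      Finset.sum_const, Finset.card_univ, Fintype.card_fin, smul_eq_mul]
    rw [← Nat.succ_mul, Nat.succ_eq_add_one, Nat.sub_add_cancel (by omega)]
  have hr : ∀ i, 0 < r i ∧ r i ≤ p ∧ r i ∣ 2 ^ k * p := by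
    refine Fin.addCases (fun _ => ?_) (fun j => ?_)
    · simpa [r] using hp.pos
    · simp only [r, Fin.append_right]
      exact ⟨by positivity, hesum ▸ Finset.single_le_sum (f := fun j => 2 ^ e j)
        (fun _ _ => Nat.zero_le _) (Finset.mem_univ j),
        (Nat.pow_dvd_pow 2 (hek j)).mul_right p⟩
  have hmem : ∃ i, r i = p := ⟨Fin.castAdd m ⟨0, by omega⟩, Fin.append_left _ _ _⟩
  refine ⟨r, ⟨fun i => (hr i).1, ?_, fun i => hrsum ▸ (hr i).2.2⟩, fun i => (hr i).2.1, hmem⟩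
  refine Finset.gcd_univ_eq_one_of_prime_of_sum_lt (fun i => (hr i).1) hp hmem ?_
  rw [hrsum, Fintype.card_fin]
  exact Nat.mul_lt_mul_of_pos_right (by omega) hp.pos

theorem stmt_7_general (n k p : ℕ) (hk : 0 < k)
    (hkn : k + 2 ^ k - 1 ≤ n) (hp : Nat.Prime p)
    (hp1 : (n : ℤ) - 2 ^ k + 1 ≤ p)
    (hp2 : (p : ℤ) ≤ ((n : ℤ) - k - 2 ^ k + 3) * 2 ^ k - 3) :
    ∃ r : Fin n → ℕ, IsArithStruct n r ∧ (∀ i, r i ≤ p) ∧ (∃ i, r i = p) := by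
  obtain ⟨m, rfl⟩ : ∃ m, n = 2 ^ k - 1 + m := ⟨n - (2 ^ k - 1), by omega⟩
  have hpow : 1 ≤ 2 ^ k := Nat.one_le_two_pow
  have hkm : k ≤ m := by omega
  push_cast [Nat.cast_sub hpow] at hp1 hp2
  have hmp : m ≤ p := by linarith
  have hp3 : p + 3 ≤ (m + 2 - k) * 2 ^ k := by
    have : ((p + 3 : ℕ) : ℤ) ≤ ((m + 2 - k) * 2 ^ k : ℕ) := by
      push_cast [Nat.cast_sub (show k ≤ m + 2 by omega)]
      linarith
    exact_mod_cast this
  have hm2 : 2 ≤ m := by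
    by_contra!
    obtain rfl : k = 1 := by omega
    obtain rfl : m = 1 := by omega
    have := hp.two_le
    norm_num at hp3
    omega
  exact exists_isArithStruct_of_hasPowTwoPartition hk hm2 hp
    (hasPowTwoPartition_of_lt hmp (by omega))

theorem stmt_7 (n k p : ℕ) (hn : 2 ≤ n) (hk : 0 < k)
    (hkn : k + 2 ^ k - 1 ≤ n) (hp : Nat.Prime p)
    (hp1 : (n : ℤ) - 2 ^ k + 1 ≤ p)
    (hp2 : (p : ℤ) ≤ ((n : ℤ) - k - 2 ^ k + 3) * 2 ^ k - 3) :
    ∃ r : Fin n → ℕ, IsArithStruct n r ∧ (∀ i, r i ≤ p) ∧ (∃ i, r i = p) :=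
  stmt_7_general n k p hk hkn hp hp1 hp2
end

section
/- Let c \ge 2 be an integer and suppose every prime factor of c is strictly greater than (n+1)^2 / 4. Then there is no arithmetical structure on K_n with maximum value c. That is, there are no positive integers r_1 \ge r_2 \ge ... \ge r_n with r_1 = c, gcd(r_1,...,r_n) = 1, and each r_j dividing r_1 + ... + r_n. -/
set_option maxHeartbeats 1000000 in
theorem stmt_9 (n c : ℕ) (hc : 2 ≤ c)
    (hfac : ∀ p : ℕ, p.Prime → p ∣ c → ((n : ℚ) + 1) ^ 2 / 4 < p) :
    ¬ ∃ r : Fin n → ℕ, IsArithStruct n r ∧ (∀ i, r i ≤ c) ∧ (∃ i, r i = c) := by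
  classical
  rintro ⟨r, ⟨hpos, hgcd, hdvd⟩, hle, i0, hi0⟩
  set S := ∑ i, r i with hSdef
  have hcpos : 0 < c := by omega
  have hSpos : 0 < S := Finset.sum_pos (fun i _ => hpos i) ⟨i0, Finset.mem_univ i0⟩
  obtain ⟨m, hm⟩ : c ∣ S := hi0 ▸ hdvd i0
  have hmpos : 0 < m := by
    rcases Nat.eq_zero_or_pos m with h | h
    · rw [h, mul_zero] at hm; omega
    · exact h
  have hmn : m ≤ n := by
    have h1 : c * m ≤ n * c := by
      rw [← hm]
      calc S ≤ ∑ _i : Fin n, c := Finset.sum_le_sum fun i _ => hle i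
        _ = n * c := by simp [mul_comm]
    by_contra h
    push_neg at h
    have h2 : n * c < m * c := mul_lt_mul_of_pos_right h hcpos
    have h3 : c * m = m * c := mul_comm c m
    linarith
  -- prime factor bound in ℕ
  have hfacN : ∀ p : ℕ, p.Prime → p ∣ c → (n + 1) ^ 2 < 4 * p := by
    intro p hp hpc
    have h := hfac p hp hpc
    rw [div_lt_iff₀ (by norm_num : (0:ℚ) < 4)] at h
    have h2 : ((n : ℚ) + 1) ^ 2 < 4 * (p : ℚ) := by linarith
    exact_mod_cast h2
  -- Key claim: every value is either c, or small
  have claimA : ∀ j, r j = c ∨ (n + 1) ^ 2 * r j < 4 * S := by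
    intro j
    obtain ⟨d, hd⟩ := hdvd j
    have hrj : 0 < r j := hpos j
    have hdpos : 0 < d := by
      rcases Nat.eq_zero_or_pos d with h | h
      · rw [h, mul_zero] at hd; omega
      · exact h
    by_cases hq : ∃ q : ℕ, q.Prime ∧ q ∣ d ∧ q ∣ c
    · obtain ⟨q, hqp, hqd, hqc⟩ := hq
      right
      have h1 : (n + 1) ^ 2 < 4 * q := hfacN q hqp hqc
      have h2 : q ≤ d := Nat.le_of_dvd hdpos hqd
      calc (n + 1) ^ 2 * r j < (4 * q) * r j := mul_lt_mul_of_pos_right h1 hrj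
        _ ≤ (4 * d) * r j := Nat.mul_le_mul_right _ (by omega)
        _ = 4 * S := by rw [hd]; ring
    · left
      have hcop : Nat.Coprime d c := by
        by_contra hnc
        exact hq (Nat.Prime.not_coprime_iff_dvd.mp hnc)
      have hdc : d ∣ c * m := by
        rw [← hm, hd]; exact dvd_mul_left d (r j)
      have hdm : d ∣ m := hcop.dvd_of_dvd_mul_left hdc
      have hmd : m ≤ d := by
        have h1 : r j * d ≤ c * d := Nat.mul_le_mul_right _ (hle j)
        have h2 : c * m = r j * d := by rw [← hd, hm]
        by_contra h
        push_neg at h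
        have h3 : c * d < c * m := mul_lt_mul_of_pos_left h hcpos
        linarith
      have hdm' : d = m := Nat.le_antisymm (Nat.le_of_dvd hmpos hdm) hmd
      have h4 : r j * d = c * m := by rw [← hd, hm]
      rw [hdm'] at h4
      exact Nat.eq_of_mul_eq_mul_right hmpos h4
  -- not all values are c
  have hne : ∃ j, r j ≠ c := by
    by_contra hall
    push_neg at hall
    have h1 : c ∣ Finset.univ.gcd r :=
      Finset.dvd_gcd fun i _ => by rw [hall i]
    rw [hgcd] at h1
    have := Nat.le_of_dvd one_pos h1
    omega
  set F := Finset.univ.filter (fun j : Fin n => r j = c) with hF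
  set G := Finset.univ.filter (fun j : Fin n => ¬ r j = c) with hG
  have hsplit : ∑ j ∈ F, r j + ∑ j ∈ G, r j = S :=
    Finset.sum_filter_add_sum_filter_not _ _ _
  have hFsum : ∑ j ∈ F, r j = F.card * c := by
    rw [Finset.sum_congr rfl (fun j hj => (Finset.mem_filter.mp hj).2),
      Finset.sum_const, smul_eq_mul]
  have hcard : F.card + G.card = n := by
    have := Finset.card_filter_add_card_filter_not
      (s := (Finset.univ : Finset (Fin n))) (p := fun j => r j = c)
    simpa using this
  have ht1 : 1 ≤ F.card := by
    have : i0 ∈ F := Finset.mem_filter.mpr ⟨Finset.mem_univ _, hi0⟩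
    exact Finset.card_pos.mpr ⟨i0, this⟩
  obtain ⟨j1, hj1⟩ := hne
  have hGne : G.Nonempty := ⟨j1, Finset.mem_filter.mpr ⟨Finset.mem_univ _, hj1⟩⟩
  have hRpos : 0 < ∑ j ∈ G, r j :=
    Finset.sum_pos (fun i _ => hpos i) hGne
  have hGbound : (n + 1) ^ 2 * ∑ j ∈ G, r j < G.card * (4 * (c * m)) := by
    rw [← hm, Finset.mul_sum]
    calc ∑ j ∈ G, (n + 1) ^ 2 * r j < ∑ _j ∈ G, 4 * S := by
          apply Finset.sum_lt_sum_of_nonempty hGne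
          intro j hj
          rcases claimA j with h | h
          · exact absurd h (Finset.mem_filter.mp hj).2
          · exact h
      _ = G.card * (4 * S) := by rw [Finset.sum_const, smul_eq_mul]
  -- pass to integers
  have e1 : (F.card : ℤ) * c + ((∑ j ∈ G, r j : ℕ) : ℤ) = (c : ℤ) * m := by
    have h : (F.card * c + ∑ j ∈ G, r j : ℕ) = c * m := by rw [← hFsum, hsplit, hm]
    exact_mod_cast h
  have e2 : ((n : ℤ) + 1) ^ 2 * ((∑ j ∈ G, r j : ℕ) : ℤ)
      < (G.card : ℤ) * (4 * ((c : ℤ) * m)) := by exact_mod_cast hGbound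
  have e4 : (1 : ℤ) ≤ ((∑ j ∈ G, r j : ℕ) : ℤ) := by exact_mod_cast hRpos
  have e5 : (F.card : ℤ) + (G.card : ℤ) = (n : ℤ) := by exact_mod_cast hcard
  have e6 : (m : ℤ) ≤ (n : ℤ) := by exact_mod_cast hmn
  have hT1 : (1 : ℤ) ≤ (F.card : ℤ) := by exact_mod_cast ht1
  have hC2 : (2 : ℤ) ≤ (c : ℤ) := by exact_mod_cast hc
  have hReq : ((∑ j ∈ G, r j : ℕ) : ℤ) = (c : ℤ) * ((m : ℤ) - (F.card : ℤ)) := by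
    linear_combination e1
  have hTM : (F.card : ℤ) + 1 ≤ (m : ℤ) := by nlinarith [hReq, e4, hC2]
  rw [hReq] at e2
  have hU' : (G.card : ℤ) = (n : ℤ) - (F.card : ℤ) := by linarith
  rw [hU'] at e2
  have hfinal : ((n : ℤ) + 1) ^ 2 * ((m : ℤ) - (F.card : ℤ))
      < 4 * (((n : ℤ) - (F.card : ℤ)) * (m : ℤ)) := by
    have h2 : (c : ℤ) * (((n : ℤ) + 1) ^ 2 * ((m : ℤ) - (F.card : ℤ)))
        < (c : ℤ) * (4 * (((n : ℤ) - (F.card : ℤ)) * (m : ℤ))) := by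
      calc (c : ℤ) * (((n : ℤ) + 1) ^ 2 * ((m : ℤ) - (F.card : ℤ)))
          = ((n : ℤ) + 1) ^ 2 * ((c : ℤ) * ((m : ℤ) - (F.card : ℤ))) := by ring
        _ < ((n : ℤ) - (F.card : ℤ)) * (4 * ((c : ℤ) * (m : ℤ))) := e2
        _ = (c : ℤ) * (4 * (((n : ℤ) - (F.card : ℤ)) * (m : ℤ))) := by ring
    exact lt_of_mul_lt_mul_left h2 (by linarith)
  have hk : (0 : ℤ) ≤ ((m : ℤ) - (F.card : ℤ) - 1) * ((n : ℤ) ^ 2 - ((m : ℤ) - (F.card : ℤ))) := by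
    apply mul_nonneg
    · linarith
    · nlinarith
  nlinarith [hfinal, hk, sq_nonneg ((m : ℤ) - ((n : ℤ) - (F.card : ℤ)))]
end

section
/- If p is a prime number with p > n^2/4 + 1, then there is no arithmetical structure on K_n whose maximum value is p. -/
private lemma amgm_aux (x y : ℤ) : 4*x*y ≤ (x+y)^2 := by nlinarith [sq_nonneg (x-y)]

set_option maxHeartbeats 1000000 in
theorem stmt_10 (n p : ℕ) (hp : Nat.Prime p) (hbig : (n : ℚ) ^ 2 / 4 + 1 < p) :
    ¬ ∃ r : Fin n → ℕ, IsArithStruct n r ∧ (∀ i, r i ≤ p) ∧ (∃ i, r i = p) := by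
  rintro ⟨r, ⟨hpos, hgcd, hdvd⟩, hle, j, hj⟩
  have hp1 : 1 < p := hp.one_lt
  have hbign : n ^ 2 + 4 < 4 * p := by
    have h : ((n : ℚ)) ^ 2 + 4 < 4 * p := by linarith
    have h2 : ((n ^ 2 + 4 : ℕ) : ℚ) < ((4 * p : ℕ) : ℚ) := by push_cast; linarith
    exact_mod_cast h2
  have h4n : 4 * n ≤ n ^ 2 + 4 := by
    zify; nlinarith [sq_nonneg ((n : ℤ) - 2)]
  have hnp : n < p := by omega
  set S := ∑ i, r i with hSdef
  have hpS : p ∣ S := hj ▸ hdvd j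
  obtain ⟨c, hc⟩ := hpS
  set A := Finset.univ.filter (fun i => r i = p) with hA
  set B := Finset.univ.filter (fun i => ¬ r i = p) with hB
  set m := A.card with hm
  set k := B.card with hk
  have hmk : m + k = n := by
    rw [hm, hk, hA, hB, Finset.card_filter_add_card_filter_not, Finset.card_univ,
      Fintype.card_fin]
  set T := ∑ i ∈ B, r i with hT
  have hsplit : m * p + T = S := by
    have h1 : ∑ i ∈ A, r i = m * p := by
      rw [Finset.sum_congr rfl (fun i hi => (Finset.mem_filter.mp hi).2), Finset.sum_const,
        smul_eq_mul]
    rw [← h1, hT, hSdef, hA, hB]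
    exact Finset.sum_filter_add_sum_filter_not _ _ _
  have hjA : j ∈ A := Finset.mem_filter.mpr ⟨Finset.mem_univ j, hj⟩
  have hm1 : 1 ≤ m := Finset.card_pos.mpr ⟨j, hjA⟩
  have hk1 : 1 ≤ k := by
    rcases Nat.eq_zero_or_pos k with h0 | h
    · exfalso
      have hBempty : B = ∅ := Finset.card_eq_zero.mp h0
      have hall : ∀ i : Fin n, p ∣ r i := by
        intro i
        by_contra hne
        have hne' : ¬ r i = p := fun h => hne (h ▸ dvd_refl p)
        have hi : i ∈ B := Finset.mem_filter.mpr ⟨Finset.mem_univ i, hne'⟩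
        simp [hBempty] at hi
      have hdg : p ∣ Finset.univ.gcd r := Finset.dvd_gcd (fun i _ => hall i)
      rw [hgcd] at hdg
      have := Nat.le_of_dvd one_pos hdg
      omega
    · exact h
  have hpT : p ∣ T := by
    have hT' : T = S - m * p := by omega
    rw [hT']
    exact Nat.dvd_sub ⟨c, hc⟩ (dvd_mul_left p m)
  obtain ⟨d, hd⟩ := hpT
  have hTpos : 0 < T := by
    apply Finset.sum_pos (fun i _ => hpos i)
    exact Finset.card_pos.mp hk1
  have hd1 : 1 ≤ d := by
    rcases Nat.eq_zero_or_pos d with h0 | h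
    · rw [h0, mul_zero] at hd; omega
    · exact h
  have hcmd : c = m + d := by
    have h1 : p * (m + d) = p * c := by
      rw [mul_add, ← hd, ← hc, ← hsplit]; ring
    exact (Nat.eq_of_mul_eq_mul_left (by omega) h1).symm
  have hcpos : 0 < c := by omega
  have hrc : ∀ i ∈ B, r i ∣ c := by
    intro i hi
    have hne : r i ≠ p := (Finset.mem_filter.mp hi).2
    have hlt : r i < p := lt_of_le_of_ne (hle i) hne
    have hndvd : ¬ p ∣ r i := fun h => absurd (Nat.le_of_dvd (hpos i) h) (by omega)
    have hcop : Nat.Coprime (r i) p := (Nat.coprime_comm.mp (hp.coprime_iff_not_dvd.mpr hndvd))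
    have hdc : r i ∣ p * c := hc ▸ hdvd i
    exact hcop.dvd_of_dvd_mul_left hdc
  have hrcle : ∀ i ∈ B, r i ≤ c := fun i hi => Nat.le_of_dvd hcpos (hrc i hi)
  have hTkc : T ≤ k * c := by
    calc T ≤ B.card • c := Finset.sum_le_card_nsmul B r c hrcle
    _ = k * c := by rw [smul_eq_mul]
  have hcn : c ≤ n := by
    have hS : S ≤ n * p := by
      calc S ≤ Finset.univ.card • p := Finset.sum_le_card_nsmul _ r p (fun i _ => hle i)
      _ = n * p := by rw [smul_eq_mul, Finset.card_univ, Fintype.card_fin]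
    have : p * c ≤ p * n := by rw [← hc]; linarith [mul_comm n p]
    exact Nat.le_of_mul_le_mul_left this (by omega)
  have hcp : c < p := lt_of_le_of_lt hcn hnp
  have hdk : d < k := by
    by_contra h
    push_neg at h
    have h2 : k * c < d * p := by nlinarith
    have h3 : p * d = T := hd.symm
    nlinarith
  rcases Nat.lt_or_ge d 2 with hd2 | hd2
  · -- d = 1 case
    have hd1' : d = 1 := by omega
    have hTp : T = p := by rw [hd, hd1', mul_one]
    have hcm1 : c = m + 1 := by omega
    set B' := B.filter (fun i => r i < c) with hB'
    have hB'sub : B' ⊆ B := Finset.filter_subset _ _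
    set b := B'.card with hb
    set t := (B \ B').card with ht
    have htb : t + b = k := by
      rw [ht, hb]; exact Finset.card_sdiff_add_card_eq_card hB'sub
    have hsumsd : ∑ i ∈ B \ B', r i + ∑ i ∈ B', r i = T := by
      rw [hT]; exact Finset.sum_sdiff hB'sub
    have hBc : ∀ i ∈ B \ B', r i = c := by
      intro i hi
      have hiB : i ∈ B := (Finset.mem_sdiff.mp hi).1
      have hni : i ∉ B' := (Finset.mem_sdiff.mp hi).2
      have hnlt : ¬ r i < c := fun h => hni (Finset.mem_filter.mpr ⟨hiB, h⟩)
      have hlec := hrcle i hiB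
      omega
    have hsum1 : ∑ i ∈ B \ B', r i = t * c := by
      rw [Finset.sum_congr rfl hBc, Finset.sum_const, smul_eq_mul, ht]
    have hhalf : ∀ i ∈ B', 2 * r i ≤ c := by
      intro i hi
      have hiB : i ∈ B := hB'sub hi
      have hlt : r i < c := (Finset.mem_filter.mp hi).2
      obtain ⟨u, hu⟩ := hrc i hiB
      have hpos' := hpos i
      have hu2 : 2 ≤ u := by
        by_contra hcon
        push_neg at hcon
        have hcle : c ≤ r i := by
          calc c = r i * u := hu
          _ ≤ r i * 1 := Nat.mul_le_mul_left _ (by omega)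
          _ = r i := mul_one _
        omega
      calc 2 * r i = r i * 2 := mul_comm _ _
      _ ≤ r i * u := Nat.mul_le_mul_left _ hu2
      _ = c := hu.symm
    rcases Nat.lt_or_ge b 2 with hblt | hbge
    · rcases Nat.eq_zero_or_pos b with hb0 | hbpos
      · -- b = 0 : p = k*c with c ≥ 2, c < p : contradicts primality
        have hB'e : B' = ∅ := Finset.card_eq_zero.mp hb0
        have hpe : p = t * c := by
          rw [← hTp, ← hsumsd, hsum1, hB'e]
          simp
        have hcdvd : c ∣ p := hpe ▸ dvd_mul_left c t
        rcases hp.eq_one_or_self_of_dvd c hcdvd with h1 | h1 <;> omega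
      · -- b = 1
        have hb1 : b = 1 := by omega
        obtain ⟨i0, hi0⟩ := Finset.card_eq_one.mp hb1
        have hi0B' : i0 ∈ B' := by rw [hi0]; exact Finset.mem_singleton_self i0
        have hsum2 : ∑ i ∈ B', r i = r i0 := by rw [hi0, Finset.sum_singleton]
        have hpe : p = t * c + r i0 := by rw [← hTp, ← hsumsd, hsum1, hsum2]
        have hdvp : r i0 ∣ p := by
          rw [hpe]
          exact dvd_add (Dvd.dvd.mul_left (hrc i0 (hB'sub hi0B')) t) dvd_rfl
        have hlt0 : r i0 < c := (Finset.mem_filter.mp hi0B').2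
        have hr1 : r i0 = 1 := by
          rcases hp.eq_one_or_self_of_dvd _ hdvp with h1 | h1
          · exact h1
          · omega
        have hpe1 : p = t * c + 1 := by omega
        have htc : 4 * (t : ℤ) * c ≤ ((t : ℤ) + c) ^ 2 := amgm_aux _ _
        have hcast : ((t : ℤ) + c) = (n : ℤ) := by
          have h5 : t + c = n := by omega
          exact_mod_cast h5
        have hpz : (p : ℤ) = (t : ℤ) * c + 1 := by exact_mod_cast hpe1
        have hbz : ((n : ℤ)) ^ 2 + 4 < 4 * p := by exact_mod_cast hbign
        rw [hcast] at htc
        linarith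
    · -- b ≥ 2
      have hsum3 : ∑ i ∈ B', 2 * r i ≤ b * c := by
        calc ∑ i ∈ B', 2 * r i ≤ B'.card • c := Finset.sum_le_card_nsmul _ _ c hhalf
        _ = b * c := by rw [smul_eq_mul]
      have h2p : 2 * p ≤ 2 * (t * c) + b * c := by
        have hms : 2 * ∑ i ∈ B', r i = ∑ i ∈ B', 2 * r i := by
          rw [Finset.mul_sum]
        have hTeq : p = t * c + ∑ i ∈ B', r i := by rw [← hTp, ← hsumsd, hsum1]
        omega
      have hz2p : 2 * (p : ℤ) ≤ 2 * ((t : ℤ) * c) + (b : ℤ) * c := by exact_mod_cast h2p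
      have htc : 4 * ((t : ℤ) + b - 1) * c ≤ (((t : ℤ) + b - 1) + c) ^ 2 := amgm_aux _ _
      have hcast : (((t : ℤ) + b - 1) + c) = (n : ℤ) := by
        have h5 : t + b + c = n + 1 := by omega
        have h6 : ((t : ℤ) + b + c) = (n : ℤ) + 1 := by exact_mod_cast h5
        linarith
      have hbz : ((n : ℤ)) ^ 2 + 4 < 4 * p := by exact_mod_cast hbign
      have hbge' : (2 : ℤ) ≤ (b : ℤ) := by exact_mod_cast hbge
      have hc0 : (0 : ℤ) ≤ (c : ℤ) := by positivity
      rw [hcast] at htc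
      have hexp : 4 * ((t : ℤ) + b - 1) * c = 4 * ((t:ℤ)*c) + 4 * ((b:ℤ)*c) - 4 * c := by ring
      rw [hexp] at htc
      have hprod : (0 : ℤ) ≤ ((b:ℤ) - 2) * c := mul_nonneg (by linarith) hc0
      have hprod' : ((b:ℤ) - 2) * c = (b:ℤ)*c - 2*c := by ring
      linarith
  · -- d ≥ 2 case
    have hkey : 4 * (k : ℤ) * ((m : ℤ) + d) ≤ (d : ℤ) * ((m : ℤ) + k) ^ 2 + 4 * d := by
      have ha : (0 : ℤ) ≤ (k : ℤ) - d := by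
        have : d ≤ k := le_of_lt hdk
        have := (Nat.cast_le (α := ℤ)).mpr this
        linarith
      have hb : (0 : ℤ) ≤ (m : ℤ) := by positivity
      have hd2' : (0 : ℤ) ≤ (d : ℤ) - 2 := by
        have := (Nat.cast_le (α := ℤ)).mpr hd2
        push_cast at this
        linarith
      have hd0 : (0 : ℤ) ≤ (d : ℤ) := by positivity
      have t1 : (0:ℤ) ≤ 2*((k:ℤ)-d)*(d:ℤ)*((d:ℤ)-2) :=
        mul_nonneg (mul_nonneg (mul_nonneg (by norm_num) ha) hd0) hd2'
      have t2 : (0:ℤ) ≤ 2*(m:ℤ)*(d:ℤ)*((d:ℤ)-2) :=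
        mul_nonneg (mul_nonneg (mul_nonneg (by norm_num) hb) hd0) hd2'
      have t3 : (0:ℤ) ≤ 2*((k:ℤ)-d)*(m:ℤ)*((d:ℤ)-2) :=
        mul_nonneg (mul_nonneg (mul_nonneg (by norm_num) ha) hb) hd2'
      have t4 : (0:ℤ) ≤ (d:ℤ)*((d:ℤ)-2)^2 := mul_nonneg hd0 (sq_nonneg _)
      have t5 : (0:ℤ) ≤ (d:ℤ)*((k:ℤ)-d)^2 := mul_nonneg hd0 (sq_nonneg _)
      have t6 : (0:ℤ) ≤ (d:ℤ)*(m:ℤ)^2 := mul_nonneg hd0 (sq_nonneg _)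
      have hid : (d : ℤ) * ((m : ℤ) + k) ^ 2 + 4 * d - 4 * (k : ℤ) * ((m : ℤ) + d) =
          2*((k:ℤ)-d)*(d:ℤ)*((d:ℤ)-2) + 2*(m:ℤ)*(d:ℤ)*((d:ℤ)-2) +
          2*((k:ℤ)-d)*(m:ℤ)*((d:ℤ)-2) + (d:ℤ)*((d:ℤ)-2)^2 + (d:ℤ)*((k:ℤ)-d)^2 +
          (d:ℤ)*(m:ℤ)^2 := by ring
      linarith
    have hpd : (p : ℤ) * d ≤ (k : ℤ) * ((m : ℤ) + d) := by
      have h1 : p * d ≤ k * c := by rw [← hd]; exact hTkc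
      have h2 : p * d ≤ k * (m + d) := by rw [← hcmd]; exact h1
      exact_mod_cast h2
    have hn' : ((m : ℤ) + k) ^ 2 + 4 < 4 * p := by
      have : ((n : ℤ)) ^ 2 + 4 < 4 * p := by exact_mod_cast hbign
      rw [show ((m : ℤ) + k) = (n : ℤ) by exact_mod_cast hmk]
      exact this
    have hd1'' : (1 : ℤ) ≤ (d : ℤ) := by exact_mod_cast hd1
    have hmul : (d:ℤ) * (((m : ℤ) + k) ^ 2 + 4) < (d:ℤ) * (4 * p) :=
      mul_lt_mul_of_pos_left hn' (by linarith)
    nlinarith [hmul, hpd, hkey]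
end

section
/- Suppose r_1 \ge r_2 \ge ... \ge r_n is an arithmetical structure on K_n with r_1 = p a prime, p \ge 3. Let S = r_1 + ... + r_n, b = S / p, and let m be the number of indices i with r_i = p. Then b > m. -/
open Finset

theorem exists_ne_of_gcd_eq_one {ι : Type*} [Fintype ι] {r : ι → ℕ} {p : ℕ}
    (hgcd : univ.gcd r = 1) (hp : p ≠ 1) : ∃ i, r i ≠ p := by
  by_contra! hall
  have hdvd : p ∣ univ.gcd r := dvd_gcd fun i _ => (hall i).symm ▸ dvd_rfl
  exact hp (Nat.dvd_one.mp (hgcd ▸ hdvd))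

theorem mul_card_filter_eq_lt_sum {ι : Type*} [Fintype ι] {r : ι → ℕ} {p : ℕ}
    (hpos : ∀ i, 0 < r i) (hne : ∃ i, r i ≠ p) :
    p * (univ.filter (fun i => r i = p)).card < ∑ i, r i := by
  obtain ⟨j, hj⟩ := hne
  have heq : ∑ i ∈ univ.filter (fun i => r i = p), r i =
      p * (univ.filter (fun i => r i = p)).card := by
    rw [sum_congr rfl fun i hi => (mem_filter.mp hi).2, sum_const, smul_eq_mul, mul_comm]
  have hrest : 0 < ∑ i ∈ univ.filter (fun i => ¬r i = p), r i :=
    sum_pos (fun i _ => hpos i) ⟨j, mem_filter.mpr ⟨mem_univ j, hj⟩⟩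
  rw [← sum_filter_add_sum_filter_not univ (fun i => r i = p), heq]
  omega

theorem stmt_13_general (n p : ℕ) (hn : 0 < n) (r : Fin n → ℕ)
    (h : IsArithStruct n r)
    (hp : Nat.Prime p) (hr1 : r ⟨0, hn⟩ = p) :
    (Finset.univ.filter (fun i => r i = p)).card < (∑ i, r i) / p := by
  obtain ⟨hpos, hgcd, hdvd⟩ := h
  have hpS : p ∣ ∑ i, r i := hr1 ▸ hdvd ⟨0, hn⟩
  rw [Nat.lt_div_iff_mul_lt' hpS]
  exact mul_card_filter_eq_lt_sum hpos (exists_ne_of_gcd_eq_one hgcd hp.ne_one)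

theorem stmt_13 (n p : ℕ) (hn : 0 < n) (r : Fin n → ℕ)
    (h : IsArithStruct n r) (hanti : Antitone r)
    (hp : Nat.Prime p) (hp3 : 3 ≤ p) (hr1 : r ⟨0, hn⟩ = p) :
    (Finset.univ.filter (fun i => r i = p)).card < (∑ i, r i) / p :=
  stmt_13_general n p hn r h hp hr1
end

section
/- Suppose r_1 \ge ... \ge r_n is an arithmetical structure on K_n with r_1 = p a prime \ge 3, and set S = r_1 + ... + r_n, b = S/p, and m the number of indices with r_i = p. If b = m + 1, then p \le nb - b^2 + 1, and consequently p \le n^2/4 + 1. -/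
/-!
The entries `r i ≠ p` are smaller than `p`, hence coprime to it, so they divide `b = S / p`;
when `b = m + 1` they sum to exactly `p`. Writing `k` for their number, `n b - b² + 1 = (k - 1) b + 1`,
and the bound is a statement about divisors of `b` summing to a prime: measured by the deficits
`b - r i`, two entries below `b` already cost `b` (a proper divisor is at most `b / 2`), while if
at most one entry `r j` lies below `b`, then `r j` divides `p`, so `r j = 1`.
-/

open Finset

namespace Nat

theorem Prime.dvd_of_dvd_mul_of_lt {p d b : ℕ} (hp : p.Prime) (hd : 0 < d) (hdp : d < p)
    (h : d ∣ p * b) : d ∣ b :=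
  (((hp.coprime_iff_not_dvd).2 fun hpd => (le_of_dvd hd hpd).not_gt hdp).symm).dvd_of_dvd_mul_left h

end Nat

section DivisorsSummingToPrime

variable {ι : Type*} (s : Finset ι) (f : ι → ℕ) {b p : ℕ}

theorem sum_add_sum_tsub_eq_card_mul (hle : ∀ i ∈ s, f i ≤ b) :
    ∑ i ∈ s, f i + ∑ i ∈ s, (b - f i) = #s * b := by
  rw [← sum_add_distrib, sum_congr rfl fun i hi => Nat.add_sub_cancel' (hle i hi), sum_const,
    smul_eq_mul]

theorem add_le_card_mul_add_one_of_sum_eq_prime [DecidableEq ι] (hp : p.Prime) (hb : 0 < b)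
    (hdvd : ∀ i ∈ s, f i ∣ b) (hne : ∀ i ∈ s, f i ≠ p) (hsum : ∑ i ∈ s, f i = p) :
    p + b ≤ #s * b + 1 := by
  have hle : ∀ i ∈ s, f i ≤ b := fun i hi => Nat.le_of_dvd hb (hdvd i hi)
  have hdeficit := sum_add_sum_tsub_eq_card_mul s f hle
  rw [hsum] at hdeficit
  by_cases htwo : ∃ i ∈ s, ∃ j ∈ s, i ≠ j ∧ f i ≠ b ∧ f j ≠ b
  · obtain ⟨i, hi, j, hj, hij, hfi, hfj⟩ := htwo
    have half : ∀ l ∈ s, f l ≠ b → b ≤ 2 * (b - f l) := fun l hl hfl => by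
      have hlt := mt (Nat.eq_of_dvd_of_lt_two_mul hb.ne' (hdvd l hl)) (Ne.symm hfl)
      have hfl_le := hle l hl
      omega
    have hpair := add_le_sum (f := fun l => b - f l) (fun _ _ => Nat.zero_le _) hi hj hij
    have hi_half := half i hi hfi
    have hj_half := half j hj hfj
    omega
  · push Not at htwo
    obtain ⟨j, hj, hrest⟩ : ∃ j ∈ s, ∀ i ∈ s.erase j, f i = b := by
      by_cases hall : ∀ i ∈ s, f i = b
      · obtain ⟨j, hj⟩ : s.Nonempty := nonempty_of_sum_ne_zero (hsum ▸ hp.ne_zero)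
        exact ⟨j, hj, fun i hi => hall i (mem_of_mem_erase hi)⟩
      · push Not at hall
        obtain ⟨j, hj, hfj⟩ := hall
        exact ⟨j, hj, fun i hi => by_contra fun hfi =>
          hfj (htwo i (mem_of_mem_erase hi) j hj (ne_of_mem_erase hi) hfi)⟩
    have hsplit : f j + ∑ i ∈ s.erase j, f i = p := by rw [add_sum_erase s f hj, hsum]
    have hfj_dvd : f j ∣ p :=
      hsplit ▸ dvd_add dvd_rfl (dvd_sum fun i hi => hrest i hi ▸ hdvd j hj)
    have hfj_one : f j = 1 := (hp.eq_one_or_self_of_dvd _ hfj_dvd).resolve_right (hne j hj)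
    have hdeficit_j : ∑ i ∈ s, (b - f i) = b - 1 := by
      rw [← add_sum_erase s _ hj, sum_eq_zero fun i hi => by rw [hrest i hi, Nat.sub_self],
        hfj_one, add_zero]
    omega

end DivisorsSummingToPrime

theorem Finset.card_filter_eq_smul_add_sum_filter_ne {ι M : Type*} [AddCommMonoid M] [DecidableEq M]
    (s : Finset ι) (f : ι → M) (c : M) :
    #{i ∈ s | f i = c} • c + ∑ i ∈ s with f i ≠ c, f i = ∑ i ∈ s, f i := by
  rw [← sum_filter_add_sum_filter_not s (f · = c), sum_congr rfl fun i hi => (mem_filter.1 hi).2,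
    sum_const]

theorem IsArithStruct.dvd_sum_div_of_lt {n p : ℕ} {r : Fin n → ℕ} (h : IsArithStruct n r)
    (hp : p.Prime) (hpS : p ∣ ∑ i, r i) {i : Fin n} (hi : r i < p) :
    r i ∣ (∑ i, r i) / p :=
  hp.dvd_of_dvd_mul_of_lt (h.1 i) hi (by rw [Nat.mul_div_cancel' hpS]; exact h.2.2 i)

theorem stmt_14_general (n p : ℕ) (hn : 0 < n) (r : Fin n → ℕ)
    (h : IsArithStruct n r) (hanti : Antitone r)
    (hp : Nat.Prime p) (hr1 : r ⟨0, hn⟩ = p)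
    (hb : (∑ i, r i) / p = (Finset.univ.filter (fun i => r i = p)).card + 1) :
    (p : ℤ) ≤ (n : ℤ) * ((∑ i, r i) / p : ℕ) - ((∑ i, r i) / p : ℕ) ^ 2 + 1 ∧
    (p : ℚ) ≤ (n : ℚ) ^ 2 / 4 + 1 := by
  set b := (∑ i, r i) / p
  set m := #(univ.filter fun i => r i = p)
  set A := univ.filter fun i => r i ≠ p
  have hpS : p ∣ ∑ i, r i := hr1 ▸ h.2.2 _
  have hcard : m + #A = n := by simpa using card_filter_add_card_filter_not (s := univ) (r · = p)
  have hsumA : ∑ i ∈ A, r i = p := by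
    have hsplit := card_filter_eq_smul_add_sum_filter_ne univ r p
    rw [← Nat.mul_div_cancel' hpS, smul_eq_mul] at hsplit
    change m * p + ∑ i ∈ A, r i = p * b at hsplit
    rw [hb] at hsplit
    linarith
  have hlt : ∀ i ∈ A, r i < p := fun i hi =>
    (hr1 ▸ hanti (Fin.mk_le_of_le_val (Nat.zero_le _)) : r i ≤ p).lt_of_ne (mem_filter.1 hi).2
  have key := add_le_card_mul_add_one_of_sum_eq_prime A r hp (by omega)
    (fun i hi => h.dvd_sum_div_of_lt hp hpS (hlt i hi)) (fun i hi => (hlt i hi).ne) hsumA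
  have hbound : (p : ℤ) ≤ n * b - b ^ 2 + 1 := by
    have hn' : (n : ℤ) = m + #A := by exact_mod_cast hcard.symm
    have hb' : (b : ℤ) = m + 1 := by exact_mod_cast hb
    have key' : (p : ℤ) + b ≤ #A * b + 1 := by exact_mod_cast key
    rw [hb'] at key'
    rw [hn', hb']
    linarith
  exact ⟨hbound, by nlinarith [sq_nonneg ((n : ℚ) - 2 * b), (by exact_mod_cast hbound :
    (p : ℚ) ≤ n * b - b ^ 2 + 1)]⟩

theorem stmt_14 (n p : ℕ) (hn : 0 < n) (r : Fin n → ℕ)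
    (h : IsArithStruct n r) (hanti : Antitone r)
    (hp : Nat.Prime p) (hp3 : 3 ≤ p) (hr1 : r ⟨0, hn⟩ = p)
    (hb : (∑ i, r i) / p = (Finset.univ.filter (fun i => r i = p)).card + 1) :
    (p : ℤ) ≤ (n : ℤ) * ((∑ i, r i) / p : ℕ) - ((∑ i, r i) / p : ℕ) ^ 2 + 1 ∧
    (p : ℚ) ≤ (n : ℚ) ^ 2 / 4 + 1 :=
  stmt_14_general n p hn r h hanti hp hr1 hb
end

section
/- Suppose r_1 \ge ... \ge r_n is an arithmetical structure on K_n with r_1 = p prime, and set S = r_1 + ... + r_n, b = S/p, and m the number of indices with r_i = p. If b \ge m + 2, then (b - m) p \le (n - m) b, and consequently p \le n + m(n - m - 2)/2 < n^2/4 + 1. -/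
set_option maxHeartbeats 1000000 in
theorem stmt_15 (n p : ℕ) (hn : 0 < n) (r : Fin n → ℕ)
    (h : IsArithStruct n r) (hanti : Antitone r)
    (hp : Nat.Prime p) (hr1 : r ⟨0, hn⟩ = p)
    (hb : (Finset.univ.filter (fun i => r i = p)).card + 2 ≤ (∑ i, r i) / p) :
    (((∑ i, r i) / p : ℕ) - ((Finset.univ.filter (fun i => r i = p)).card : ℤ)) * p ≤
      ((n : ℤ) - (Finset.univ.filter (fun i => r i = p)).card) * ((∑ i, r i) / p : ℕ) ∧
    (p : ℚ) ≤ (n : ℚ) +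
      ((Finset.univ.filter (fun i => r i = p)).card : ℚ) *
        ((n : ℚ) - (Finset.univ.filter (fun i => r i = p)).card - 2) / 2 ∧
    (p : ℚ) < (n : ℚ) ^ 2 / 4 + 1 := by
  obtain ⟨hpos, hgcd, hdvd⟩ := h
  set S := ∑ i, r i with hS
  set T := Finset.univ.filter (fun i => r i = p) with hT
  set m := T.card with hm
  set b := S / p with hbdef
  have hpS : p ∣ S := hr1 ▸ hdvd ⟨0, hn⟩
  have hSpb : S = p * b := by rw [hbdef]; exact (Nat.mul_div_cancel' hpS).symm
  clear_value S T m b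
  have hmn : m ≤ n := by
    rw [hm, hT]
    simpa using Finset.card_filter_le (Finset.univ : Finset (Fin n)) (fun i => r i = p)
  have hm1 : 1 ≤ m := by
    rw [hm]
    exact Finset.card_pos.mpr ⟨⟨0, hn⟩, by rw [hT]; simp [hr1]⟩
  have hle : ∀ i, r i ≤ p := by
    intro i
    have : (⟨0, hn⟩ : Fin n) ≤ i := by simp [Fin.le_def]
    simpa [hr1] using hanti this
  -- each entry not equal to p is at most b
  have hkey : ∀ i ∈ Tᶜ, r i ≤ b := by
    intro i hi
    have hne : r i ≠ p := by simpa [hT] using hi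
    have hlt : r i < p := lt_of_le_of_ne (hle i) hne
    have hcop : Nat.Coprime p (r i) := (Nat.Prime.coprime_iff_not_dvd hp).mpr
      (fun hd => absurd (Nat.le_of_dvd (hpos i) hd) (not_le.mpr hlt))
    have hdb : r i ∣ b := Nat.Coprime.dvd_of_dvd_mul_left hcop.symm (hSpb ▸ hdvd i)
    exact Nat.le_of_dvd (by omega) hdb
  have hTc : Tᶜ = Finset.univ.filter (fun i => ¬ r i = p) := by
    rw [hT, Finset.compl_filter]
  have hsplit : S = m * p + ∑ i ∈ Tᶜ, r i := by
    rw [hS, ← Finset.sum_filter_add_sum_filter_not Finset.univ (fun i => r i = p) r, hTc]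
    congr 1
    rw [Finset.sum_congr rfl (fun i hi => (Finset.mem_filter.mp hi).2)]
    simp [hm, hT, mul_comm]
  have hcompl : (Tᶜ : Finset (Fin n)).card = n - m := by
    rw [Finset.card_compl]; simp [hm]
  have hsum : ∑ i ∈ Tᶜ, r i ≤ (n - m) * b := by
    calc ∑ i ∈ Tᶜ, r i ≤ (Tᶜ).card * b := by
          simpa using Finset.sum_le_card_nsmul (Tᶜ) r b hkey
    _ = (n - m) * b := by rw [hcompl]
  -- first inequality over ℤ
  have h1 : ((b : ℤ) - (m : ℤ)) * (p : ℤ) ≤ ((n : ℤ) - (m : ℤ)) * (b : ℤ) := by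
    have hZ : (S : ℤ) = (p : ℤ) * (b : ℤ) := by exact_mod_cast hSpb
    have hZ2 : (S : ℤ) = (m : ℤ) * (p : ℤ) + ((∑ i ∈ Tᶜ, r i : ℕ) : ℤ) := by exact_mod_cast hsplit
    have hZ3 : ((∑ i ∈ Tᶜ, r i : ℕ) : ℤ) ≤ ((n : ℤ) - (m : ℤ)) * (b : ℤ) := by
      have := hsum
      have h4 : ((n - m : ℕ) : ℤ) = (n : ℤ) - (m : ℤ) := by
        rw [Nat.cast_sub hmn]
      calc ((∑ i ∈ Tᶜ, r i : ℕ) : ℤ) ≤ (((n - m) * b : ℕ) : ℤ) := by exact_mod_cast this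
      _ = ((n : ℤ) - (m : ℤ)) * (b : ℤ) := by push_cast [Nat.cast_sub hmn]; ring
    nlinarith [hZ, hZ2, hZ3]
  have hbZ : (m : ℤ) + 2 ≤ (b : ℤ) := by exact_mod_cast hb
  have hmnZ : (m : ℤ) ≤ (n : ℤ) := by exact_mod_cast hmn
  have hm1Z : (1 : ℤ) ≤ (m : ℤ) := by exact_mod_cast hm1
  have hident : ((b : ℤ) - m) * (2 * (n : ℤ) + m * ((n : ℤ) - m - 2) - 2 * p) =
      (m : ℤ) * ((n : ℤ) - m) * ((b : ℤ) - m - 2) +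
        2 * (((n : ℤ) - m) * b - ((b : ℤ) - m) * p) := by ring
  have hnn : (0 : ℤ) ≤ (m : ℤ) * ((n : ℤ) - m) * ((b : ℤ) - m - 2) :=
    mul_nonneg (mul_nonneg (by positivity) (by linarith)) (by linarith)
  have hprod : (0 : ℤ) ≤ ((b : ℤ) - m) * (2 * (n : ℤ) + m * ((n : ℤ) - m - 2) - 2 * p) := by
    rw [hident]; linarith [h1]
  have h2 : 2 * (p : ℤ) ≤ 2 * (n : ℤ) + (m : ℤ) * ((n : ℤ) - (m : ℤ) - 2) := by
    by_contra hcon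
    push_neg at hcon
    have hneg : ((b : ℤ) - m) * (2 * (n : ℤ) + m * ((n : ℤ) - m - 2) - 2 * p) < 0 :=
      mul_neg_of_pos_of_neg (by linarith) (by linarith)
    linarith
  refine ⟨h1, ?_, ?_⟩
  · have h2Q : 2 * (p : ℚ) ≤ 2 * (n : ℚ) + (m : ℚ) * ((n : ℚ) - (m : ℚ) - 2) := by
      exact_mod_cast h2
    linarith
  · have hmsq : (1 : ℤ) ≤ (m : ℤ) ^ 2 := by nlinarith [hm1Z]
    have hid : 4 * (n : ℤ) + 2 * (m : ℤ) * ((n : ℤ) - (m : ℤ) - 2) =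
        (n : ℤ) ^ 2 + 4 - (((n : ℤ) - 2 - (m : ℤ)) ^ 2 + (m : ℤ) ^ 2) := by ring
    have h3 : 4 * (p : ℤ) < (n : ℤ) ^ 2 + 4 := by
      linarith [sq_nonneg ((n : ℤ) - 2 - (m : ℤ)), h2, hmsq, hid]
    have h3Q : 4 * (p : ℚ) < (n : ℚ) ^ 2 + 4 := by exact_mod_cast h3
    linarith
end

section
/- For every positive integer c \le \max_{k \ge 1} (2^k n - (k + 2^k - 2) 2^k - 1), there exists an arithmetical structure on K_n whose maximum value is c. -/
lemma isArithStruct_getElem {L : List ℕ} (hone : 1 ∈ L) (hdvd : ∀ x ∈ L, x ∣ L.sum) :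
    IsArithStruct L.length (fun i => L[(i : ℕ)]) := by
  have hsum : 0 < L.sum := List.le_sum_of_mem hone
  refine ⟨fun i => Nat.pos_of_dvd_of_pos (hdvd _ (L.getElem_mem _)) hsum, ?_, fun j => ?_⟩
  · obtain ⟨i, hi, hLi⟩ := List.mem_iff_getElem.mp hone
    exact Nat.dvd_one.mp (hLi ▸ Finset.gcd_dvd (Finset.mem_univ (⟨i, hi⟩ : Fin L.length)))
  · rw [Fin.sum_univ_getElem]
    exact hdvd _ (L.getElem_mem _)

lemma exists_isArithStruct_max_of_list {n c : ℕ} (L : List ℕ) (hlen : L.length = n)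
    (hone : 1 ∈ L) (hc : c ∈ L) (hle : ∀ x ∈ L, x ≤ c) (hdvd : ∀ x ∈ L, x ∣ L.sum) :
    ∃ r : Fin n → ℕ, IsArithStruct n r ∧ (∀ i, r i ≤ c) ∧ ∃ i, r i = c := by
  subst hlen
  obtain ⟨i, hi, rfl⟩ := List.mem_iff_getElem.mp hc
  exact ⟨_, isArithStruct_getElem hone hdvd, fun j => hle _ (L.getElem_mem _), ⟨i, hi⟩, rfl⟩

lemma exists_isArithStruct_max_of_lt {n c : ℕ} (hc : 0 < c) (hcn : c < n) :
    ∃ r : Fin n → ℕ, IsArithStruct n r ∧ (∀ i, r i ≤ c) ∧ ∃ i, r i = c := by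
  have hmem : ∀ x ∈ List.replicate (n - c) c ++ List.replicate c 1, x = c ∨ x = 1 := by
    simp only [List.mem_append, List.mem_replicate]
    rintro x (⟨-, rfl⟩ | ⟨-, rfl⟩) <;> simp
  refine exists_isArithStruct_max_of_list (List.replicate (n - c) c ++ List.replicate c 1)
    (by simp; omega) (by simp; omega) (by simp; omega) ?_ ?_
  · intro x hx
    rcases hmem x hx with rfl | rfl <;> omega
  · intro x hx
    rcases hmem x hx with rfl | rfl
    · simp [List.sum_replicate, Nat.dvd_add_self_right]
    · exact one_dvd _

lemma two_mul_two_pow_le (k : ℕ) : 2 * 2 ^ k ≤ k * 2 ^ k + 2 := by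
  induction k with
  | zero => simp
  | succ k ih =>
    have : 1 ≤ 2 ^ k := Nat.one_le_two_pow
    rw [pow_succ]
    nlinarith

/-- Lowering the cap from `2 * h` to `h` keeps the bound of `exists_list_dvd_two_pow_sum_eq`
as soon as the remainder `m` is too small to use a summand `2 * h`. -/
lemma sum_bound_of_double_cap {k h s m : ℕ} (hkh : k < h) (hsmall : m + 2 ≤ s + 2 * h)
    (hm : m + 2 + (k + 1) * (2 * h) ≤ (s + 2) * (2 * h)) :
    m + 2 + k * h ≤ (s + 2) * h := by
  rcases le_or_gt s k with hsk | hks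
  · have : s = k := by nlinarith
    subst this
    nlinarith
  · nlinarith

lemma exists_list_dvd_two_pow_sum_eq :
    ∀ s k m : ℕ, s ≤ m → m + 2 + k * 2 ^ k ≤ (s + 2) * 2 ^ k →
      ∃ L : List ℕ, L.length = s ∧ L.sum = m ∧ ∀ x ∈ L, x ∣ 2 ^ k := by
  intro s
  induction s with
  | zero =>
    intro k m _ hm
    have := two_mul_two_pow_le k
    exact ⟨[], rfl, by simp; omega, by simp⟩
  | succ s ihs =>
    intro k
    induction k with
    | zero =>
      intro m hsm hm
      exact ⟨List.replicate (s + 1) 1, by simp, by simp at hm ⊢; omega, by simp⟩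
    | succ k ihk =>
      intro m hsm hm
      by_cases hbig : s + 2 ^ (k + 1) ≤ m
      · obtain ⟨L, hlen, hsum, hdvd⟩ := ihs (k + 1) (m - 2 ^ (k + 1)) (by omega) (by
          have : (s + 1 + 2) * 2 ^ (k + 1) = (s + 2) * 2 ^ (k + 1) + 2 ^ (k + 1) := by ring
          omega)
        refine ⟨2 ^ (k + 1) :: L, by simp [hlen], by simp [hsum]; omega, ?_⟩
        simpa using hdvd
      · obtain ⟨L, hlen, hsum, hdvd⟩ := ihk m hsm (by
          rw [pow_succ'] at hm hbig
          exact sum_bound_of_double_cap Nat.lt_two_pow_self (by omega) hm)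
        exact ⟨L, hlen, hsum, fun x hx => (hdvd x hx).trans (pow_dvd_pow 2 k.le_succ)⟩

lemma exists_isArithStruct_max_of_two_pow {n c k : ℕ} (hk : 0 < k) (hn : 2 ^ k ≤ n)
    (hnc : n ≤ c) (hbound : c + 1 + k * 2 ^ k ≤ (n - 2 ^ k + 2) * 2 ^ k) :
    ∃ r : Fin n → ℕ, IsArithStruct n r ∧ (∀ i, r i ≤ c) ∧ ∃ i, r i = c := by
  have hk2 : 2 ≤ 2 ^ k := Nat.le_self_pow hk.ne' 2
  obtain ⟨P, hlen, hsum, hdvd⟩ :=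
    exists_list_dvd_two_pow_sum_eq (n - 2 ^ k) k (c - 1) (by omega) (by omega)
  have hmem : ∀ x ∈ List.replicate (2 ^ k - 1) c ++ 1 :: P, x = c ∨ x ∣ 2 ^ k := by
    simp only [List.mem_append, List.mem_replicate, List.mem_cons]
    rintro x (⟨-, rfl⟩ | rfl | hx)
    exacts [.inl rfl, .inr (one_dvd _), .inr (hdvd x hx)]
  refine exists_isArithStruct_max_of_list (List.replicate (2 ^ k - 1) c ++ 1 :: P)
    (by simp [hlen]; omega) (by simp) (by simp; omega) ?_ ?_
  · intro x hx
    rcases hmem x hx with rfl | hx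
    · rfl
    · exact (Nat.le_of_dvd (by positivity) hx).trans (hn.trans hnc)
  · have hsum' : (List.replicate (2 ^ k - 1) c ++ 1 :: P).sum = 2 ^ k * c := by
      simp only [List.sum_append, List.sum_replicate, smul_eq_mul, List.sum_cons, hsum]
      rw [Nat.sub_mul, one_mul]
      have : c ≤ 2 ^ k * c := Nat.le_mul_of_pos_left c (by positivity)
      omega
    intro x hx
    rw [hsum']
    rcases hmem x hx with rfl | hx
    exacts [dvd_mul_left _ _, dvd_mul_of_dvd_left hx _]

theorem stmt_17 (n c : ℕ) (hc : 0 < c)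
    (hbound : ∃ k : ℕ, 0 < k ∧
      (c : ℤ) ≤ 2 ^ k * n - ((k : ℤ) + 2 ^ k - 2) * 2 ^ k - 1) :
    ∃ r : Fin n → ℕ, IsArithStruct n r ∧ (∀ i, r i ≤ c) ∧ (∃ i, r i = c) := by
  obtain ⟨k, hk, hb⟩ := hbound
  rcases lt_or_ge c n with hcn | hnc
  · exact exists_isArithStruct_max_of_lt hc hcn
  have hn : 2 ^ k ≤ n := by
    by_contra! h
    have : (n : ℤ) + 1 ≤ 2 ^ k := by exact_mod_cast h
    have : (1 : ℤ) ≤ k := by exact_mod_cast hk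
    nlinarith
  refine exists_isArithStruct_max_of_two_pow hk hn hnc ?_
  zify [hn]
  linarith
end

section
/- For every prime p \le \max_{k \ge 1} (2^k n - (k + 2^k - 3) 2^k - 3), there exists an arithmetical structure on K_n whose maximum value is p. -/
/-!
For `p < n` take `p` with multiplicity `n - b` and `1` with multiplicity `b = p * ⌊(n - 1) / p⌋`:
the sum is divisible by `p`. For `n ≤ p` (so `p` is odd), the bound makes `p` a sum of exactly
`t = n + 1 - 2 ^ k` powers of two, each at most `2 ^ k`: start from `⌊p / 2 ^ k⌋` copies of `2 ^ k`
plus the binary expansion of `p % 2 ^ k`, then halve parts until there are `t` of them. Adding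
`2 ^ k - 1` copies of `p` gives `n` entries with sum `2 ^ k * p`, which each of them divides.
-/

theorem Multiset.exists_fin_map_eq {α : Type*} {n : ℕ} (s : Multiset α)
    (hs : Multiset.card s = n) : ∃ r : Fin n → α, Finset.univ.val.map r = s := by
  obtain ⟨l, rfl⟩ : ∃ l : List α, (l : Multiset α) = s := Quotient.exists_rep s
  rw [Multiset.coe_card] at hs
  subst hs
  exact ⟨l.get, by rw [Fin.univ_val_map, List.ofFn_get]⟩

def HasArithStructWithMax (n p : ℕ) : Prop :=
  ∃ r : Fin n → ℕ, IsArithStruct n r ∧ (∀ i, r i ≤ p) ∧ ∃ i, r i = p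

theorem hasArithStructWithMax_of_multiset {n p : ℕ} (s : Multiset ℕ)
    (hcard : Multiset.card s = n) (hpos : ∀ x ∈ s, 0 < x) (hdvd : ∀ x ∈ s, x ∣ s.sum)
    (hps : p ∈ s) (hmax : ∀ x ∈ s, x ≤ p) (hcop : ∃ x ∈ s, Nat.Coprime p x) :
    HasArithStructWithMax n p := by
  obtain ⟨r, hr⟩ := s.exists_fin_map_eq hcard
  have hmem (i : Fin n) : r i ∈ s := hr ▸ Multiset.mem_map_of_mem r (Finset.mem_univ_val i)
  have hgcd : s.gcd = 1 := by
    obtain ⟨x, hxs, hpx⟩ := hcop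
    exact Nat.eq_one_of_dvd_coprimes hpx (Multiset.gcd_dvd hps) (Multiset.gcd_dvd hxs)
  have hsum : ∑ i, r i = s.sum := by rw [Finset.sum_eq_multiset_sum, hr]
  refine ⟨r, ⟨fun i => hpos _ (hmem i), ?_, fun j => hsum ▸ hdvd _ (hmem j)⟩,
    fun i => hmax _ (hmem i), ?_⟩
  · rwa [Finset.gcd_def, hr]
  · obtain ⟨i, -, hi⟩ := Multiset.mem_map.mp (hr ▸ hps)
    exact ⟨i, hi⟩

def IsSumOfTwoPows (c t N : ℕ) : Prop :=
  ∃ s : Multiset ℕ, Multiset.card s = t ∧ (∀ x ∈ s, ∃ j ≤ c, x = 2 ^ j) ∧ s.sum = N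

namespace IsSumOfTwoPows

variable {c t t' N N' : ℕ}

theorem zero : IsSumOfTwoPows c 0 0 := ⟨0, by simp⟩

theorem two_pow {j : ℕ} (hj : j ≤ c) : IsSumOfTwoPows c 1 (2 ^ j) :=
  ⟨{2 ^ j}, by simp, fun _ hx => ⟨j, hj, Multiset.mem_singleton.mp hx⟩, by simp⟩

theorem add (h : IsSumOfTwoPows c t N) (h' : IsSumOfTwoPows c t' N') :
    IsSumOfTwoPows c (t + t') (N + N') := by
  obtain ⟨s, hs, hpow, rfl⟩ := h
  obtain ⟨s', hs', hpow', rfl⟩ := h'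
  refine ⟨s + s', by simp [hs, hs'], fun x hx => ?_, Multiset.sum_add s s'⟩
  rcases Multiset.mem_add.mp hx with hx | hx
  exacts [hpow x hx, hpow' x hx]

theorem two_pow_mul (q : ℕ) : IsSumOfTwoPows c q (2 ^ c * q) := by
  induction q with
  | zero => exact zero
  | succ q ih => simpa [mul_add] using ih.add (two_pow le_rfl)

theorem succ_of_lt (h : IsSumOfTwoPows c t N) (ht : t < N) : IsSumOfTwoPows c (t + 1) N := by
  obtain ⟨s, rfl, hpow, rfl⟩ := h
  obtain ⟨x, hxs, hx⟩ : ∃ x ∈ s, 1 < x := by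
    by_contra! hle
    have := Multiset.sum_le_card_nsmul s 1 hle
    simp only [smul_eq_mul, mul_one] at this
    omega
  obtain ⟨j, hjc, rfl⟩ := hpow x hxs
  obtain ⟨i, rfl⟩ : ∃ i, j = i + 1 := Nat.exists_eq_add_one.mpr (by
    rcases j with _ | j
    · simp at hx
    · omega)
  obtain ⟨s', rfl⟩ := Multiset.exists_cons_of_mem hxs
  refine ⟨2 ^ i ::ₘ 2 ^ i ::ₘ s', by simp, fun x hx => ?_, by simp [pow_succ]; ring⟩
  simp only [Multiset.mem_cons] at hx
  rcases hx with rfl | rfl | hx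
  · exact ⟨i, by omega, rfl⟩
  · exact ⟨i, by omega, rfl⟩
  · exact hpow x (Multiset.mem_cons_of_mem hx)

theorem of_le (h : IsSumOfTwoPows c t N) (ht : t ≤ t') (ht' : t' ≤ N) :
    IsSumOfTwoPows c t' N := by
  induction t', ht using Nat.le_induction with
  | base => exact h
  | succ t' _ ih => exact (ih (by omega)).succ_of_lt (by omega)

end IsSumOfTwoPows

theorem exists_isSumOfTwoPows_of_lt_two_pow {c k m : ℕ} (hm : m < 2 ^ k) (hk : k ≤ c) :
    ∃ u ≤ k, IsSumOfTwoPows c u m := by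
  induction k generalizing m with
  | zero => exact ⟨0, le_rfl, by simp_all [IsSumOfTwoPows.zero]⟩
  | succ k ih =>
    rcases lt_or_ge m (2 ^ k) with hmk | hmk
    · obtain ⟨u, hu, h⟩ := ih hmk (by omega)
      exact ⟨u, by omega, h⟩
    · obtain ⟨u, hu, h⟩ := ih (m := m - 2 ^ k) (by rw [pow_succ] at hm; omega) (by omega)
      refine ⟨u + 1, by omega, ?_⟩
      simpa [Nat.sub_add_cancel hmk] using h.add (IsSumOfTwoPows.two_pow (j := k) (by omega))

theorem exists_isSumOfTwoPows_of_succ_lt_two_pow {c k m : ℕ} (hm : m + 1 < 2 ^ k) (hk : k ≤ c) :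
    ∃ u < k, IsSumOfTwoPows c u m := by
  induction k generalizing m with
  | zero => simp at hm
  | succ k ih =>
    rcases lt_or_ge m (2 ^ k) with hmk | hmk
    · obtain ⟨u, hu, h⟩ := exists_isSumOfTwoPows_of_lt_two_pow (c := c) hmk (by omega)
      exact ⟨u, by omega, h⟩
    · obtain ⟨u, hu, h⟩ := ih (m := m - 2 ^ k) (by rw [pow_succ] at hm; omega) (by omega)
      refine ⟨u + 1, by omega, ?_⟩
      simpa [Nat.sub_add_cancel hmk] using h.add (IsSumOfTwoPows.two_pow (j := k) (by omega))

theorem isSumOfTwoPows_of_mul_le {k t N : ℕ} (h : N + 2 + k * 2 ^ k ≤ 2 ^ k * (t + 2))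
    (ht : t ≤ N) : IsSumOfTwoPows k t N := by
  obtain ⟨q, r, hr, rfl⟩ : ∃ q r, r < 2 ^ k ∧ 2 ^ k * q + r = N :=
    ⟨N / 2 ^ k, N % 2 ^ k, Nat.mod_lt _ (by positivity), Nat.div_add_mod N _⟩
  -- `r` needs at most `k` parts, and at most `k - 1` unless `r = 2 ^ k - 1`
  obtain ⟨u, hut, hu⟩ : ∃ u, q + u ≤ t ∧ IsSumOfTwoPows k u r := by
    rcases lt_or_ge (r + 1) (2 ^ k) with hr1 | hr1
    · obtain ⟨u, hu, h'⟩ := exists_isSumOfTwoPows_of_succ_lt_two_pow hr1 le_rfl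
      refine ⟨u, ?_, h'⟩
      have : 2 ^ k * (q + k) < 2 ^ k * (t + 2) := by nlinarith
      have := Nat.lt_of_mul_lt_mul_left this
      omega
    · obtain ⟨u, hu, h'⟩ := exists_isSumOfTwoPows_of_lt_two_pow hr le_rfl
      refine ⟨u, ?_, h'⟩
      have : 2 ^ k * (q + 1 + k) < 2 ^ k * (t + 2) := by nlinarith
      have := Nat.lt_of_mul_lt_mul_left this
      omega
  exact ((IsSumOfTwoPows.two_pow_mul q).add hu).of_le hut ht

theorem hasArithStructWithMax_of_lt {n p : ℕ} (hp : 0 < p) (hpn : p < n) :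
    HasArithStructWithMax n p := by
  set b := p * ((n - 1) / p)
  have hbn : b < n := by have := Nat.mul_div_le (n - 1) p; omega
  have hpb : p ≤ b := Nat.le_mul_of_pos_right p (Nat.div_pos (by omega) hp)
  have hsum : (Multiset.replicate (n - b) p + Multiset.replicate b 1).sum = (n - b) * p + b := by
    simp
  refine hasArithStructWithMax_of_multiset (Multiset.replicate (n - b) p + Multiset.replicate b 1)
    (by simp only [Multiset.card_add, Multiset.card_replicate]; omega) ?_ ?_ ?_ ?_
    ⟨1, ?_, Nat.coprime_one_right p⟩
  · intro x hx
    rcases Multiset.mem_add.mp hx with hx | hx <;> rw [Multiset.eq_of_mem_replicate hx] <;> omega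
  · intro x hx
    rw [hsum]
    rcases Multiset.mem_add.mp hx with hx | hx <;> rw [Multiset.eq_of_mem_replicate hx]
    · exact dvd_add (dvd_mul_left p _) (dvd_mul_right p _)
    · exact one_dvd _
  · exact Multiset.mem_add.mpr (Or.inl (Multiset.mem_replicate.mpr ⟨by omega, rfl⟩))
  · intro x hx
    rcases Multiset.mem_add.mp hx with hx | hx <;> rw [Multiset.eq_of_mem_replicate hx]
    omega
  · exact Multiset.mem_add.mpr (Or.inr (Multiset.mem_replicate.mpr ⟨by omega, rfl⟩))

theorem hasArithStructWithMax_of_isSumOfTwoPows {n p c t : ℕ} (hp : Odd p) (hc : 0 < c)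
    (h : IsSumOfTwoPows c t p) (hn : t + 2 ^ c = n + 1) :
    HasArithStructWithMax n p := by
  obtain ⟨s, rfl, hpow, hsp⟩ := h
  have hc2 : 2 ≤ 2 ^ c := Nat.le_self_pow hc.ne' 2
  have hsum : (Multiset.replicate (2 ^ c - 1) p + s).sum = 2 ^ c * p := by
    rw [Multiset.sum_add, Multiset.sum_replicate, hsp, smul_eq_mul, ← Nat.succ_mul,
      Nat.succ_eq_add_one, Nat.sub_add_cancel (by omega)]
  obtain ⟨x, hxs⟩ : ∃ x, x ∈ s := Multiset.exists_mem_of_ne_zero <| by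
    rintro rfl
    exact hp.pos.ne (Multiset.sum_zero.symm.trans hsp)
  refine hasArithStructWithMax_of_multiset (Multiset.replicate (2 ^ c - 1) p + s)
    (by simp only [Multiset.card_add, Multiset.card_replicate]; omega) ?_ ?_ ?_ ?_
    ⟨x, Multiset.mem_add.mpr (Or.inr hxs), ?_⟩
  · intro x hx
    rcases Multiset.mem_add.mp hx with hx | hx
    · rw [Multiset.eq_of_mem_replicate hx]; exact hp.pos
    · obtain ⟨j, -, rfl⟩ := hpow x hx; positivity
  · intro x hx
    rw [hsum]
    rcases Multiset.mem_add.mp hx with hx | hx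
    · rw [Multiset.eq_of_mem_replicate hx]; exact dvd_mul_left p _
    · obtain ⟨j, hj, rfl⟩ := hpow x hx
      exact dvd_mul_of_dvd_left (pow_dvd_pow 2 hj) p
  · exact Multiset.mem_add.mpr (Or.inl (Multiset.mem_replicate.mpr ⟨by omega, rfl⟩))
  · intro x hx
    rcases Multiset.mem_add.mp hx with hx | hx
    · exact (Multiset.eq_of_mem_replicate hx).le
    · exact hsp ▸ Multiset.le_sum_of_mem hx
  · obtain ⟨j, -, rfl⟩ := hpow x hxs
    exact (Nat.coprime_two_right.mpr hp).pow_right j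

theorem stmt_18 (n p : ℕ) (hp : Nat.Prime p)
    (hbound : ∃ k : ℕ, 0 < k ∧
      (p : ℤ) ≤ 2 ^ k * n - ((k : ℤ) + 2 ^ k - 3) * 2 ^ k - 3) :
    ∃ r : Fin n → ℕ, IsArithStruct n r ∧ (∀ i, r i ≤ p) ∧ (∃ i, r i = p) := by
  obtain ⟨k, hk, hb⟩ := hbound
  have hbN : p + 3 + (k + 2 ^ k) * 2 ^ k ≤ 2 ^ k * (n + 3) := by
    zify; linarith
  rcases lt_or_ge p n with hpn | hnp
  · exact hasArithStructWithMax_of_lt hp.pos hpn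
  have hk2 : 2 ≤ 2 ^ k := Nat.le_self_pow hk.ne' 2
  have hkn : k + 2 ^ k < n + 3 := by
    by_contra! h
    nlinarith
  -- `p = 2` would force `n ≤ 2`, hence `k = 1`, and then `hbN` reads `11 ≤ 2 * (n + 3)`
  have hodd : Odd p := hp.odd_of_ne_two (by
    rintro rfl
    nlinarith)
  obtain ⟨t, ht⟩ : ∃ t, t + 2 ^ k = n + 1 := ⟨n + 1 - 2 ^ k, by omega⟩
  have hsum : IsSumOfTwoPows k t p := isSumOfTwoPows_of_mul_le (by nlinarith) (by omega)
  exact hasArithStructWithMax_of_isSumOfTwoPows hodd hk hsum ht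
end

section
/- There exists an arithmetical structure on K_27 whose maximum value is the prime 181, but there is no arithmetical structure on K_27 whose maximum value is the prime 179. -/
open Finset

theorem sum_eq_mul_card_filter_eq_add {ι : Type*} (s : Finset ι) (f : ι → ℕ) (p : ℕ) :
    ∑ i ∈ s, f i = p * #{i ∈ s | f i = p} + ∑ i ∈ s with f i ≠ p, f i := by
  rw [← sum_filter_add_sum_filter_not s (f · = p), sum_congr rfl fun i hi => (mem_filter.1 hi).2,
    sum_const, smul_eq_mul, mul_comm]

theorem eq_add_one_of_mul_eq_mul_add {n p m b t : ℕ} (hn : (n + 2) ^ 2 < 8 * p) (hmn : m ≤ n)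
    (ht : p * b = p * m + t) (ht0 : 0 < t) (htle : t ≤ (n - m) * b) : b = m + 1 := by
  obtain ⟨c, rfl⟩ := Nat.exists_eq_add_of_le hmn
  rw [Nat.add_sub_cancel_left] at htle
  have hmb : m < b := by nlinarith
  obtain ⟨k, rfl⟩ := Nat.exists_eq_add_of_lt hmb
  rcases k with _ | k
  · rfl
  · have hcp : c ≤ p := by nlinarith [sq_nonneg ((c : ℤ) - 2)]
    nlinarith [Nat.mul_le_mul_right k hcp, sq_nonneg ((c : ℤ) - m - 2)]

theorem sum_ne_179_of_forall_dvd {ι : Type*} {s : Finset ι} {f : ι → ℕ} {b : ℕ} (hb : 0 < b)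
    (hdvd : ∀ i ∈ s, f i ∣ b) (hcard : #s + b = 28) : ∑ i ∈ s, f i ≠ 179 := by
  have hmaps : ∀ i ∈ s, f i ∈ b.divisors := fun i hi => Nat.mem_divisors.2 ⟨hdvd i hi, hb.ne'⟩
  have hsum : ∑ i ∈ s, f i = ∑ d ∈ b.divisors, #{i ∈ s | f i = d} * d := calc
    ∑ i ∈ s, f i = ∑ d ∈ b.divisors, ∑ i ∈ s with f i = d, d :=
      (sum_fiberwise_of_maps_to' hmaps fun d => d).symm
    _ = _ := by simp only [sum_const, smul_eq_mul]
  rw [card_eq_sum_card_fiberwise hmaps] at hcard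
  rw [hsum]
  have hb28 : b ≤ 28 := by omega
  clear hsum hmaps hdvd
  interval_cases b <;>
    simp only [Nat.divisors_one, Nat.divisors_ofNat, mem_insert, mem_singleton, OfNat.one_ne_ofNat,
      or_self, not_false_eq_true, sum_insert, sum_singleton, Nat.reduceEqDiff, mul_one, ne_eq]
      at hcard ⊢ <;>
    first | omega | lia

namespace IsArithStruct

variable {n : ℕ} {r : Fin n → ℕ}

theorem exists_ne_of_ne_one (h : IsArithStruct n r) {p : ℕ} (hp : p ≠ 1) : ∃ j, r j ≠ p := by
  by_contra! hall
  have hdvd : p ∣ univ.gcd r := dvd_gcd fun j _ => (hall j).symm ▸ dvd_rfl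
  exact hp (Nat.eq_one_of_dvd_one (h.2.1 ▸ hdvd))

theorem eq_or_dvd_of_le_prime (h : IsArithStruct n r) {p b : ℕ} (hp : p.Prime)
    (hle : ∀ i, r i ≤ p) (hb : ∑ i, r i = p * b) (j : Fin n) : r j = p ∨ r j ∣ b := by
  by_cases hpj : p ∣ r j
  · exact .inl (le_antisymm (hle j) (Nat.le_of_dvd (h.1 j) hpj))
  · exact .inr ((hp.coprime_iff_not_dvd.2 hpj).symm.dvd_of_dvd_mul_left (hb ▸ h.2.2 j))

theorem exists_sum_filter_ne_eq_of_prime_max (h : IsArithStruct n r) {p : ℕ} (hp : p.Prime)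
    (hn : (n + 2) ^ 2 < 8 * p) (hle : ∀ i, r i ≤ p) {i₀ : Fin n} (hi₀ : r i₀ = p) :
    ∃ b, 0 < b ∧ #{i | r i ≠ p} + b = n + 1 ∧ (∀ i, r i ≠ p → r i ∣ b) ∧
      ∑ i with r i ≠ p, r i = p := by
  obtain ⟨b, hb⟩ : p ∣ ∑ i, r i := hi₀ ▸ h.2.2 i₀
  have hb0 : 0 < b := by
    have hpos : 0 < ∑ i, r i := sum_pos (fun i _ => h.1 i) ⟨i₀, mem_univ _⟩
    exact Nat.pos_of_mul_pos_left (hb ▸ hpos)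
  have hdvd : ∀ i, r i ≠ p → r i ∣ b := fun i =>
    (h.eq_or_dvd_of_le_prime hp hle hb i).resolve_left
  have hsplit := sum_eq_mul_card_filter_eq_add univ r p
  have hcard : #{i | r i = p} + #{i | r i ≠ p} = n := by
    simpa using card_filter_add_card_filter_not (s := univ) (r · = p)
  obtain ⟨j, hj⟩ := h.exists_ne_of_ne_one hp.ne_one
  have hpos : 0 < ∑ i with r i ≠ p, r i := sum_pos (fun i _ => h.1 i) ⟨j, by simpa using hj⟩
  have hle_b : ∑ i with r i ≠ p, r i ≤ #{i | r i ≠ p} * b :=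
    sum_le_card_nsmul _ _ _ fun i hi => Nat.le_of_dvd hb0 (hdvd i (mem_filter.1 hi).2)
  have hsub : n - #{i | r i = p} = #{i | r i ≠ p} := by omega
  have hbm : b = #{i | r i = p} + 1 :=
    eq_add_one_of_mul_eq_mul_add hn (by omega) (hb ▸ hsplit) hpos (by rwa [hsub])
  refine ⟨b, hb0, by omega, hdvd, ?_⟩
  rw [hb, hbm, mul_add_one] at hsplit
  omega

end IsArithStruct

theorem exists_isArithStruct_max_181 :
    ∃ r : Fin 27 → ℕ, IsArithStruct 27 r ∧ (∀ i, r i ≤ 181) ∧ ∃ i, r i = 181 := by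
  -- eleven entries 181, fifteen entries 12 and one 1, with sum 12 * 181
  refine ⟨fun i => if i.val < 11 then 181 else if i.val < 26 then 12 else 1,
    ⟨?_, ?_, ?_⟩, ?_, ⟨0, by decide⟩⟩ <;> decide

theorem not_exists_isArithStruct_max_179 :
    ¬ ∃ r : Fin 27 → ℕ, IsArithStruct 27 r ∧ (∀ i, r i ≤ 179) ∧ ∃ i, r i = 179 := by
  rintro ⟨r, h, hle, i₀, hi₀⟩
  obtain ⟨b, hb0, hcard, hdvd, hsum⟩ :=
    h.exists_sum_filter_ne_eq_of_prime_max (by norm_num) (by norm_num) hle hi₀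
  exact sum_ne_179_of_forall_dvd hb0 (fun i hi => hdvd i (mem_filter.1 hi).2) hcard hsum

theorem stmt_19 :
    (∃ r : Fin 27 → ℕ, IsArithStruct 27 r ∧ (∀ i, r i ≤ 181) ∧ (∃ i, r i = 181)) ∧
    ¬ (∃ r : Fin 27 → ℕ, IsArithStruct 27 r ∧ (∀ i, r i ≤ 179) ∧ (∃ i, r i = 179)) :=
  ⟨exists_isArithStruct_max_181, not_exists_isArithStruct_max_179⟩
end
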